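/- arXiv:1311.6047 — 10 statements merged into one kernel-verified Lean document; each statement's English description precedes it below -/
import Mathlib

section
/- Let ν be a discrete valuation dominating a local domain (R, m_R), and for n ∈ ℕ let I_n = {f ∈ R : ν(f) ≥ n}. If dim_{R/m_R}(I_n/I_{n+1}) = r and k is the value ν(g) of some nonzero g ∈ R, then dim_{R/m_R}(I_{n+k}/I_{n+k+1}) ≥ r. -/
/-!
Since `ν(g * x) = k + ν(x)`, multiplication by `g` maps `I_m` into `I_{m+k}` and pulls `I_{m+k}`
back exactly onto `I_m`. Hence it induces an injective `R`-linear map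
`I_n/I_{n+1} → I_{n+k}/I_{n+k+1}`, which is automatically `R/m_R`-linear because `R → R/m_R` is
surjective.
-/

theorem Submodule.mapQ_injective_of_comap_eq {R M N : Type*} [Ring R] [AddCommGroup M]
    [Module R M] [AddCommGroup N] [Module R N] (p : Submodule R M) (q : Submodule R N)
    (f : M →ₗ[R] N) (h : q.comap f = p) : Function.Injective (p.mapQ q f h.ge) := by
  rw [← LinearMap.ker_eq_bot, Submodule.ker_mapQ, h, Submodule.mkQ_map_self]

theorem mul_mem_add_iff_of_val {R : Type*} [CommRing R] [IsDomain R] (w : R → ℤ)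
    (hw : ∀ x y : R, x ≠ 0 → y ≠ 0 → w (x * y) = w x + w y) (I : ℕ → Ideal R)
    (hI : ∀ (m : ℕ) (f : R), f ∈ I m ↔ f = 0 ∨ (m : ℤ) ≤ w f) {g : R} (hg : g ≠ 0) {k : ℕ}
    (hk : w g = k) (m : ℕ) (x : R) : g * x ∈ I (m + k) ↔ x ∈ I m := by
  rcases eq_or_ne x 0 with rfl | hx
  · simp only [mul_zero, zero_mem]
  rw [hI, hI, hw g x hg hx, hk, or_iff_right (mul_ne_zero hg hx), or_iff_right hx]
  push_cast
  omega

section GradedMul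

variable {R : Type*} [CommRing R] (I : ℕ → Ideal R) {g : R} {k : ℕ}
  (hgI : ∀ (m : ℕ) (x : R), g * x ∈ I (m + k) ↔ x ∈ I m)

include hgI in
theorem comap_mulLeft_restrict_eq (n : ℕ) :
    (Submodule.comap (I (n + k)).subtype (I (n + k + 1))).comap
        ((LinearMap.mulLeft R g).restrict (p := I n) (q := I (n + k)) fun x => (hgI n x).2) =
      Submodule.comap (I n).subtype (I (n + 1)) := by
  ext x
  have := hgI (n + 1) x
  rwa [Nat.add_right_comm] at this

def gradedMulLeft (n : ℕ) :
    (↥(I n) ⧸ Submodule.comap (I n).subtype (I (n + 1))) →ₗ[R]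
      (↥(I (n + k)) ⧸ Submodule.comap (I (n + k)).subtype (I (n + k + 1))) :=
  Submodule.mapQ _ _ _ (comap_mulLeft_restrict_eq I hgI n).ge

theorem gradedMulLeft_injective (n : ℕ) : Function.Injective (gradedMulLeft I hgI n) :=
  Submodule.mapQ_injective_of_comap_eq _ _ _ (comap_mulLeft_restrict_eq I hgI n)

end GradedMul

theorem stmt0 {R : Type} [CommRing R] [IsDomain R] [IsLocalRing R]
    (v : FractionRing R → ℤ)
    -- v is a valuation of the quotient field K = FractionRing R
    (hv_mul : ∀ x y : FractionRing R, x ≠ 0 → y ≠ 0 → v (x * y) = v x + v y)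
    (hv_add : ∀ x y : FractionRing R, x ≠ 0 → y ≠ 0 → x + y ≠ 0 →
      min (v x) (v y) ≤ v (x + y))
    -- the value group is ℤ (ν is discrete)
    (hv_surj : ∀ m : ℤ, ∃ x : FractionRing R, x ≠ 0 ∧ v x = m)
    -- ν dominates (R, m_R): V_ν ⊇ R and m_ν ∩ R = m_R
    (hdom : ∀ f : R, f ≠ 0 → 0 ≤ v (algebraMap R (FractionRing R) f))
    (hmax : ∀ f : R, f ≠ 0 →
      (f ∈ IsLocalRing.maximalIdeal R ↔ 0 < v (algebraMap R (FractionRing R) f)))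
    -- the valuation ideals I_n = {f ∈ R : ν(f) ≥ n}
    (I : ℕ → Ideal R)
    (hI : ∀ (n : ℕ) (f : R), f ∈ I n ↔ f = 0 ∨ (n : ℤ) ≤ v (algebraMap R (FractionRing R) f))
    -- the residue field R/m_R acts on the quotients I_n/I_{n+1}, compatibly with R
    [instMod : ∀ n : ℕ, Module (R ⧸ IsLocalRing.maximalIdeal R)
      (↥(I n) ⧸ (Submodule.comap (I n).subtype (I (n + 1))))]
    [∀ n : ℕ, IsScalarTower R (R ⧸ IsLocalRing.maximalIdeal R)
      (↥(I n) ⧸ (Submodule.comap (I n).subtype (I (n + 1))))]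
    (n : ℕ) (r : ℕ)
    (hdim : Module.rank (R ⧸ IsLocalRing.maximalIdeal R)
      (↥(I n) ⧸ (Submodule.comap (I n).subtype (I (n + 1)))) = r)
    (k : ℕ) (g : R) (hg : g ≠ 0) (hk : v (algebraMap R (FractionRing R) g) = (k : ℤ)) :
    (r : Cardinal) ≤ Module.rank (R ⧸ IsLocalRing.maximalIdeal R)
      (↥(I (n + k)) ⧸ (Submodule.comap (I (n + k)).subtype (I (n + k + 1)))) := by
  have hA : ∀ x : R, x ≠ 0 → algebraMap R (FractionRing R) x ≠ 0 := fun _ =>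
    (map_ne_zero_iff _ (IsFractionRing.injective R (FractionRing R))).2
  have hgI := mul_mem_add_iff_of_val _
    (fun x y hx hy => by rw [map_mul, hv_mul _ _ (hA x hx) (hA y hy)]) I hI hg hk
  rw [← hdim]
  exact LinearMap.rank_le_of_injective
    ((gradedMulLeft I hgI n).extendScalarsOfSurjective Ideal.Quotient.mk_surjective)
    (gradedMulLeft_injective I hgI n)
end

section
/- Let ν be a discrete valuation dominating a local domain (R, m_R) whose residue field extension V_ν/m_ν over R/m_R is finite of degree r. Then for every n ∈ ℕ, dim_{R/m_R}(I_n/I_{n+1}) ≤ r, where I_n = {f ∈ R : ν(f) ≥ n}. -/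
/-!
Pick `y ∈ K` with `ν(y) = n`. Dividing by `y` sends `I_n` into the valuation ring `V_ν` and an
element of `I_n` lies in `I_{n+1}` exactly when its image lies in `m_ν`, so `I_n/I_{n+1}` embeds
`R`-linearly into `V_ν/m_ν`. The spanning and independence hypotheses on the family `a` say that
`c ↦ ∑ cᵢ aᵢ` induces an `R`-linear isomorphism `(R/m_R)^r ≃ V_ν/m_ν`. Since `R → R/m_R` is
surjective, the composite embedding `I_n/I_{n+1} → (R/m_R)^r` is `R/m_R`-linear, whence the bound.
-/

theorem Submodule.exists_injective_subquotient_map {R A B : Type*} [CommRing R]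
    [AddCommGroup A] [Module R A] [AddCommGroup B] [Module R B] (g : A →ₗ[R] B)
    {P P' : Submodule R A} {O M : Submodule R B}
    (hP : ∀ x ∈ P, g x ∈ O) (hP' : ∀ x ∈ P, x ∈ P' ↔ g x ∈ M) :
    ∃ j : (P ⧸ P'.comap P.subtype) →ₗ[R] O ⧸ M.comap O.subtype, Function.Injective j := by
  let g' : P →ₗ[R] O := (g.domRestrict P).codRestrict O fun x => hP x x.2
  have hker : P'.comap P.subtype = LinearMap.ker ((M.comap O.subtype).mkQ ∘ₗ g') := by
    ext x
    simp only [mem_comap, subtype_apply, LinearMap.mem_ker, LinearMap.comp_apply, mkQ_apply,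
      Quotient.mk_eq_zero]
    exact hP' x x.2
  exact ⟨_, LinearMap.ker_eq_bot.mp (Submodule.ker_liftQ_eq_bot' _ _ hker)⟩

-- The value `v 0` is junk: every condition is on nonzero elements.
structure IsIntValuation {K : Type*} [Field K] (v : K → ℤ) : Prop where
  map_mul : ∀ x y : K, x ≠ 0 → y ≠ 0 → v (x * y) = v x + v y
  min_le_map_add : ∀ x y : K, x ≠ 0 → y ≠ 0 → x + y ≠ 0 → min (v x) (v y) ≤ v (x + y)

namespace IsIntValuation

variable {K : Type*} [Field K] {v : K → ℤ}

theorem map_one (hv : IsIntValuation v) : v 1 = 0 := by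
  have := hv.map_mul 1 1 one_ne_zero one_ne_zero
  rw [mul_one] at this
  omega

theorem map_inv (hv : IsIntValuation v) {x : K} (hx : x ≠ 0) : v x⁻¹ = -v x := by
  have := hv.map_mul x x⁻¹ hx (inv_ne_zero hx)
  rw [mul_inv_cancel₀ hx, hv.map_one] at this
  omega

theorem mul_eq_zero_or_add_le (hv : IsIntValuation v) {x y : K} {k l : ℤ}
    (hx : x = 0 ∨ k ≤ v x) (hy : y = 0 ∨ l ≤ v y) : x * y = 0 ∨ k + l ≤ v (x * y) := by
  rcases eq_or_ne x 0 with rfl | hx0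
  · exact Or.inl (zero_mul y)
  rcases eq_or_ne y 0 with rfl | hy0
  · exact Or.inl (mul_zero x)
  rw [hv.map_mul x y hx0 hy0]
  exact Or.inr (add_le_add (hx.resolve_left hx0) (hy.resolve_left hy0))

variable {R : Type*} [CommRing R] [Algebra R K]

def geSubmodule (hv : IsIntValuation v) (hdom : ∀ f : R, f ≠ 0 → 0 ≤ v (algebraMap R K f))
    (k : ℤ) : Submodule R K where
  carrier := {x | x = 0 ∨ k ≤ v x}
  zero_mem' := Or.inl rfl
  add_mem' {x y} hx hy := by
    rcases eq_or_ne x 0 with rfl | hx0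
    · rwa [zero_add]
    rcases eq_or_ne y 0 with rfl | hy0
    · rwa [add_zero]
    rcases eq_or_ne (x + y) 0 with hxy | hxy
    · exact Or.inl hxy
    exact Or.inr ((le_min (hx.resolve_left hx0) (hy.resolve_left hy0)).trans
      (hv.min_le_map_add x y hx0 hy0 hxy))
  smul_mem' c x hx := by
    have hc : algebraMap R K c = 0 ∨ 0 ≤ v (algebraMap R K c) := by
      rcases eq_or_ne c 0 with rfl | hc
      · exact Or.inl (map_zero _)
      · exact Or.inr (hdom c hc)
    simpa [Algebra.smul_def] using hv.mul_eq_zero_or_add_le hc hx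

variable (hv : IsIntValuation v) (hdom : ∀ f : R, f ≠ 0 → 0 ≤ v (algebraMap R K f))

theorem mem_geSubmodule {k : ℤ} {x : K} : x ∈ hv.geSubmodule hdom k ↔ x = 0 ∨ k ≤ v x :=
  Iff.rfl

theorem mem_geSubmodule_one {x : K} : x ∈ hv.geSubmodule hdom 1 ↔ x = 0 ∨ 0 < v x :=
  Iff.rfl

theorem inv_mul_mem_geSubmodule_iff {k : ℤ} {x y : K} (hy : y ≠ 0) :
    y⁻¹ * x ∈ hv.geSubmodule hdom k ↔ x ∈ hv.geSubmodule hdom (k + v y) := by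
  rcases eq_or_ne x 0 with rfl | hx
  · simp only [mul_zero, zero_mem]
  simp only [mem_geSubmodule, hx, mul_eq_zero, inv_eq_zero, hy, false_or,
    hv.map_mul _ _ (inv_ne_zero hy) hx, hv.map_inv hy]
  omega

theorem mem_iff_inv_mul_mem_geSubmodule (hinj : Function.Injective (algebraMap R K))
    {J : Ideal R} {m : ℤ} (hJ : ∀ f, f ∈ J ↔ f = 0 ∨ m ≤ v (algebraMap R K f))
    {y : K} (hy : y ≠ 0) (f : R) :
    f ∈ J ↔ y⁻¹ * algebraMap R K f ∈ hv.geSubmodule hdom (m - v y) := by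
  rw [inv_mul_mem_geSubmodule_iff hv hdom hy, sub_add_cancel, mem_geSubmodule, hJ,
    map_eq_zero_iff _ hinj]

-- `V_ν ⧸ m_ν`, where `V_ν = geSubmodule 0` and `m_ν = geSubmodule 1`.
abbrev residueModule : Type _ :=
  hv.geSubmodule hdom 0 ⧸ (hv.geSubmodule hdom 1).comap (hv.geSubmodule hdom 0).subtype

variable {r : ℕ} (a : Fin r → K) (ha : ∀ i, a i ∈ hv.geSubmodule hdom 0)

def residueMap : (Fin r → R) →ₗ[R] hv.residueModule hdom :=
  Submodule.mkQ _ ∘ₗ Fintype.linearCombination R fun i => ⟨a i, ha i⟩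

theorem coe_linearCombination (c : Fin r → R) :
    (Fintype.linearCombination R (fun i => (⟨a i, ha i⟩ : hv.geSubmodule hdom 0)) c : K) =
      ∑ i, algebraMap R K (c i) * a i := by
  simp [Fintype.linearCombination_apply, Algebra.smul_def]

theorem residueMap_eq_zero_iff (c : Fin r → R) :
    hv.residueMap hdom a ha c = 0 ↔ ∑ i, algebraMap R K (c i) * a i ∈ hv.geSubmodule hdom 1 := by
  rw [residueMap, LinearMap.comp_apply, Submodule.mkQ_apply, Submodule.Quotient.mk_eq_zero,
    Submodule.mem_comap, Submodule.subtype_apply, coe_linearCombination]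

theorem residueMap_surjective
    (hspan : ∀ x : K, (x = 0 ∨ 0 ≤ v x) → ∃ c : Fin r → R,
      x - ∑ i, algebraMap R K (c i) * a i = 0 ∨ 0 < v (x - ∑ i, algebraMap R K (c i) * a i)) :
    Function.Surjective (hv.residueMap hdom a ha) := by
  rintro ⟨x⟩
  obtain ⟨c, hc⟩ := hspan x x.2
  refine ⟨c, (Submodule.Quotient.eq _).mpr ?_⟩
  rw [Submodule.mem_comap, Submodule.subtype_apply, AddSubgroupClass.coe_sub,
    coe_linearCombination, ← neg_sub]
  exact neg_mem ((hv.mem_geSubmodule_one hdom).mpr hc)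

theorem ker_residueMap [IsLocalRing R]
    (hmax : ∀ f : R, f ≠ 0 → (f ∈ IsLocalRing.maximalIdeal R ↔ 0 < v (algebraMap R K f)))
    (hind : ∀ c : Fin r → R, (∑ i, algebraMap R K (c i) * a i = 0 ∨
        0 < v (∑ i, algebraMap R K (c i) * a i)) → ∀ i, c i ∈ IsLocalRing.maximalIdeal R) :
    LinearMap.ker (hv.residueMap hdom a ha) =
      Submodule.pi Set.univ fun _ => IsLocalRing.maximalIdeal R := by
  ext c
  simp only [LinearMap.mem_ker, residueMap_eq_zero_iff, Submodule.mem_pi, Set.mem_univ,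
    true_imp_iff]
  refine ⟨fun h => hind c ((hv.mem_geSubmodule_one hdom).mp h),
    fun hc => Submodule.sum_mem _ fun i _ => ?_⟩
  have hci : algebraMap R K (c i) = 0 ∨ 1 ≤ v (algebraMap R K (c i)) := by
    rcases eq_or_ne (c i) 0 with h0 | h0
    · exact Or.inl (by rw [h0, map_zero])
    · exact Or.inr ((hmax _ h0).mp (hc i))
  have := hv.mul_eq_zero_or_add_le hci (ha i)
  rwa [add_zero] at this

noncomputable def residueEquiv [IsLocalRing R]
    (hmax : ∀ f : R, f ≠ 0 → (f ∈ IsLocalRing.maximalIdeal R ↔ 0 < v (algebraMap R K f)))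
    (hspan : ∀ x : K, (x = 0 ∨ 0 ≤ v x) → ∃ c : Fin r → R,
      x - ∑ i, algebraMap R K (c i) * a i = 0 ∨ 0 < v (x - ∑ i, algebraMap R K (c i) * a i))
    (hind : ∀ c : Fin r → R, (∑ i, algebraMap R K (c i) * a i = 0 ∨
        0 < v (∑ i, algebraMap R K (c i) * a i)) → ∀ i, c i ∈ IsLocalRing.maximalIdeal R) :
    (Fin r → R ⧸ IsLocalRing.maximalIdeal R) ≃ₗ[R] hv.residueModule hdom :=
  (Submodule.quotientPi fun _ => IsLocalRing.maximalIdeal R).symm ≪≫ₗ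
    Submodule.quotEquivOfEq _ _ (hv.ker_residueMap hdom a ha hmax hind).symm ≪≫ₗ
    (hv.residueMap hdom a ha).quotKerEquivOfSurjective (hv.residueMap_surjective hdom a ha hspan)

end IsIntValuation

theorem stmt2 {R : Type} [CommRing R] [IsDomain R] [IsLocalRing R]
    (v : FractionRing R → ℤ)
    -- v is a valuation of the quotient field K = FractionRing R
    (hv_mul : ∀ x y : FractionRing R, x ≠ 0 → y ≠ 0 → v (x * y) = v x + v y)
    (hv_add : ∀ x y : FractionRing R, x ≠ 0 → y ≠ 0 → x + y ≠ 0 →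
      min (v x) (v y) ≤ v (x + y))
    -- the value group is ℤ (ν is discrete)
    (hv_surj : ∀ m : ℤ, ∃ x : FractionRing R, x ≠ 0 ∧ v x = m)
    -- ν dominates (R, m_R): V_ν ⊇ R and m_ν ∩ R = m_R
    (hdom : ∀ f : R, f ≠ 0 → 0 ≤ v (algebraMap R (FractionRing R) f))
    (hmax : ∀ f : R, f ≠ 0 →
      (f ∈ IsLocalRing.maximalIdeal R ↔ 0 < v (algebraMap R (FractionRing R) f)))
    -- the valuation ideals I_n = {f ∈ R : ν(f) ≥ n}
    (I : ℕ → Ideal R)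
    (hI : ∀ (n : ℕ) (f : R), f ∈ I n ↔ f = 0 ∨ (n : ℤ) ≤ v (algebraMap R (FractionRing R) f))
    (r : ℕ)
    -- the residue field extension (V_ν/m_ν : R/m_R) has a basis of r elements:
    -- a family a i of units of V_ν whose residues span V_ν/m_ν over R/m_R ...
    (a : Fin r → FractionRing R)
    (ha : ∀ i, a i ≠ 0 ∧ v (a i) = 0)
    (hspan : ∀ x : FractionRing R, (x = 0 ∨ 0 ≤ v x) → ∃ c : Fin r → R,
      x - ∑ i, algebraMap R (FractionRing R) (c i) * a i = 0 ∨
      0 < v (x - ∑ i, algebraMap R (FractionRing R) (c i) * a i))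
    -- ... and whose residues are linearly independent over R/m_R
    (hind : ∀ c : Fin r → R,
      ((∑ i, algebraMap R (FractionRing R) (c i) * a i) = 0 ∨
        0 < v (∑ i, algebraMap R (FractionRing R) (c i) * a i)) →
      ∀ i, c i ∈ IsLocalRing.maximalIdeal R)
    -- the residue field R/m_R acts on the quotients I_n/I_{n+1}, compatibly with R
    [instMod : ∀ n : ℕ, Module (R ⧸ IsLocalRing.maximalIdeal R)
      (↥(I n) ⧸ (Submodule.comap (I n).subtype (I (n + 1))))]
    [∀ n : ℕ, IsScalarTower R (R ⧸ IsLocalRing.maximalIdeal R)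
      (↥(I n) ⧸ (Submodule.comap (I n).subtype (I (n + 1))))]
    (n : ℕ) :
    Module.rank (R ⧸ IsLocalRing.maximalIdeal R)
      (↥(I n) ⧸ (Submodule.comap (I n).subtype (I (n + 1)))) ≤ (r : Cardinal) := by
  have hv : IsIntValuation v := ⟨hv_mul, hv_add⟩
  have hinj := IsFractionRing.injective R (FractionRing R)
  obtain ⟨y, hy, hyn⟩ := hv_surj n
  have hIn (f : R) : f ∈ I n ↔ y⁻¹ * algebraMap R _ f ∈ hv.geSubmodule hdom 0 := by
    rw [hv.mem_iff_inv_mul_mem_geSubmodule hdom hinj (hI n) hy, hyn, sub_self]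
  have hIsucc (f : R) : f ∈ I (n + 1) ↔ y⁻¹ * algebraMap R _ f ∈ hv.geSubmodule hdom 1 := by
    rw [hv.mem_iff_inv_mul_mem_geSubmodule hdom hinj (hI (n + 1)) hy, hyn, Nat.cast_succ,
      add_sub_cancel_left]
  obtain ⟨j, hj⟩ := Submodule.exists_injective_subquotient_map
    (LinearMap.mulLeft R y⁻¹ ∘ₗ Algebra.linearMap R (FractionRing R))
    (fun f hf => (hIn f).mp hf) (fun f _ => hIsucc f)
  let e := hv.residueEquiv hdom a (fun i => Or.inr (ha i).2.ge) hmax hspan hind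
  let ψ : _ →ₗ[R ⧸ IsLocalRing.maximalIdeal R] _ :=
    (e.symm.toLinearMap ∘ₗ j).extendScalarsOfSurjective Ideal.Quotient.mk_surjective
  calc _ ≤ Module.rank _ (Fin r → R ⧸ IsLocalRing.maximalIdeal R) :=
        LinearMap.rank_le_of_injective ψ (e.symm.injective.comp hj)
    _ = r := rank_fin_fun r
end

section
/- Let ν be an algebraic discrete valuation dominating a local domain (R, m_R) with [V_ν/m_ν : R/m_R] = r finite. Then there exists n₁ ∈ ℕ such that dim_{R/m_R}(I_n/I_{n+1}) = r for all n ≥ n₁. -/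
/-!
Write an element of value `1` as `p / q` with `p, q ∈ R`; then `ν(p) = ν(q) + 1`, and the monomials
`q ^ a * p ^ b` realise every value `≥ ν(q) ^ 2`. Multiplying by a common denominator of the
`a i`, for every large `n` there is `x ∈ R` with `ν(x) = n` and all `x * a i ∈ R`. Division by
`x` identifies `I n / I (n + 1)` with `V_ν / m_ν`, so the classes of the `x * a i` form a basis of
`I n / I (n + 1)` over `R / m_R`.
-/

open IsLocalRing

theorem Nat.exists_mul_add_mul_succ_eq {s n : ℕ} (h : s * s ≤ n) :
    ∃ a b : ℕ, a * s + b * (s + 1) = n := by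
  refine ⟨n / s - n % s, n % s, ?_⟩
  rcases Nat.eq_zero_or_pos s with rfl | hs
  · simp
  · have hmod : n % s ≤ n / s := (Nat.mod_lt n hs).le.trans ((Nat.le_div_iff_mul_le hs).2 h)
    have := Nat.div_add_mod' n s
    have := Nat.mul_le_mul_right s hmod
    rw [Nat.sub_mul, mul_add, mul_one]
    omega

section Valuation

variable {K : Type*} [Field K] {v : K → ℤ}

theorem map_one_eq_zero_of_map_mul (hv_mul : ∀ x y : K, x ≠ 0 → y ≠ 0 → v (x * y) = v x + v y) :
    v 1 = 0 := by
  have := hv_mul 1 1 one_ne_zero one_ne_zero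
  rw [mul_one] at this
  omega

theorem map_pow_of_map_mul (hv_mul : ∀ x y : K, x ≠ 0 → y ≠ 0 → v (x * y) = v x + v y)
    {x : K} (hx : x ≠ 0) (m : ℕ) : v (x ^ m) = m * v x := by
  induction m with
  | zero => simpa using map_one_eq_zero_of_map_mul hv_mul
  | succ m ih =>
    rw [pow_succ, hv_mul _ _ (pow_ne_zero m hx) hx, ih]
    push_cast
    ring

variable {R : Type*} [CommRing R] [IsDomain R] [Algebra R K] [IsFractionRing R K]

theorem exists_forall_ge_exists_map_eq
    (hv_mul : ∀ x y : K, x ≠ 0 → y ≠ 0 → v (x * y) = v x + v y)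
    (hdom : ∀ f : R, f ≠ 0 → 0 ≤ v (algebraMap R K f)) {z : K} (hz0 : z ≠ 0) (hz : v z = 1) :
    ∃ N : ℕ, ∀ n ≥ N, ∃ f : R, f ≠ 0 ∧ v (algebraMap R K f) = n := by
  obtain ⟨p, q, hq, rfl⟩ := IsFractionRing.div_surjective R z
  have hq0 : q ≠ 0 := nonZeroDivisors.ne_zero hq
  have hqK : algebraMap R K q ≠ 0 := IsFractionRing.to_map_ne_zero_of_mem_nonZeroDivisors hq
  have hp0 : p ≠ 0 := by rintro rfl; simp at hz0
  have hvp : v (algebraMap R K p) = v (algebraMap R K q) + 1 := by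
    rw [← hz, ← hv_mul _ _ hqK hz0, mul_div_cancel₀ _ hqK]
  obtain ⟨s, hs⟩ := Int.eq_ofNat_of_zero_le (hdom q hq0)
  refine ⟨s * s, fun n hn => ?_⟩
  obtain ⟨a, b, hab⟩ := Nat.exists_mul_add_mul_succ_eq hn
  have hpK : algebraMap R K p ≠ 0 := by simpa using hp0
  refine ⟨q ^ a * p ^ b, mul_ne_zero (pow_ne_zero a hq0) (pow_ne_zero b hp0), ?_⟩
  rw [map_mul, map_pow, map_pow, hv_mul _ _ (pow_ne_zero a hqK) (pow_ne_zero b hpK),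
    map_pow_of_map_mul hv_mul hqK, map_pow_of_map_mul hv_mul hpK, hvp, hs, ← hab]
  push_cast
  ring

theorem exists_forall_ge_exists_map_eq_and_isInteger
    (hv_mul : ∀ x y : K, x ≠ 0 → y ≠ 0 → v (x * y) = v x + v y)
    (hdom : ∀ f : R, f ≠ 0 → 0 ≤ v (algebraMap R K f)) {z : K} (hz0 : z ≠ 0) (hz : v z = 1)
    {ι : Type*} [Finite ι] (a : ι → K) :
    ∃ N : ℕ, ∀ n ≥ N, ∃ x : R, x ≠ 0 ∧ v (algebraMap R K x) = n ∧
      ∀ i, IsLocalization.IsInteger R (algebraMap R K x * a i) := by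
  obtain ⟨N, hN⟩ := exists_forall_ge_exists_map_eq hv_mul hdom hz0 hz
  obtain ⟨d, hd⟩ := IsLocalization.exist_integer_multiples_of_finite (nonZeroDivisors R) a
  have hd0 : (d : R) ≠ 0 := nonZeroDivisors.ne_zero d.2
  obtain ⟨t, ht⟩ := Int.eq_ofNat_of_zero_le (hdom d hd0)
  refine ⟨N + t, fun n hn => ?_⟩
  obtain ⟨f, hf0, hfv⟩ := hN (n - t) (by omega)
  refine ⟨f * d, mul_ne_zero hf0 hd0, ?_, fun i => ?_⟩
  · rw [map_mul, hv_mul _ _ (map_ne_zero_iff _ (IsFractionRing.injective R K) |>.2 hf0)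
      (map_ne_zero_iff _ (IsFractionRing.injective R K) |>.2 hd0), hfv, ht]
    omega
  · have := IsLocalization.isInteger_smul (a := f) (hd i)
    rwa [Algebra.smul_def, Algebra.smul_def, ← mul_assoc, ← map_mul] at this

end Valuation

theorem linearIndependent_quotient_of_forall_sum_smul_eq_zero {R M ι : Type*} [CommRing R]
    {m : Ideal R} [AddCommGroup M] [Module R M] [Module (R ⧸ m) M] [IsScalarTower R (R ⧸ m) M]
    [Fintype ι] {β : ι → M} (h : ∀ c : ι → R, ∑ i, c i • β i = 0 → ∀ i, c i ∈ m) :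
    LinearIndependent (R ⧸ m) β := by
  rw [Fintype.linearIndependent_iff]
  intro g hg i
  choose c hc using fun i => Ideal.Quotient.mk_surjective (g i)
  simp only [← hc, ← Ideal.Quotient.algebraMap_eq, algebraMap_smul] at hg
  rw [← hc, Ideal.Quotient.eq_zero_iff_mem]
  exact h c hg i

section ValuationIdeals

variable {R K ι : Type*} [CommRing R] [Field K] [Algebra R K] {v : K → ℤ} {I : ℕ → Ideal R}
  [Fintype ι] {a : ι → K}

theorem algebraMap_coe_sum_smul {J : Ideal R} {x : K} {b : ι → J}
    (hb : ∀ i, algebraMap R K (b i) = x * a i) (c : ι → R) :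
    algebraMap R K ((∑ i, c i • b i : J) : R) = x * ∑ i, algebraMap R K (c i) * a i := by
  simp only [Submodule.coe_sum, Submodule.coe_smul, smul_eq_mul, map_sum, map_mul, hb,
    Finset.mul_sum]
  exact Finset.sum_congr rfl fun i _ => by ring

variable [IsFractionRing R K]

theorem mem_iff_of_algebraMap_eq_mul
    (hv_mul : ∀ x y : K, x ≠ 0 → y ≠ 0 → v (x * y) = v x + v y)
    (hI : ∀ (n : ℕ) (f : R), f ∈ I n ↔ f = 0 ∨ (n : ℤ) ≤ v (algebraMap R K f))
    {x y : K} (hx0 : x ≠ 0) {f : R} (hf : algebraMap R K f = x * y) (k : ℕ) :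
    f ∈ I k ↔ y = 0 ∨ (k : ℤ) ≤ v x + v y := by
  rw [hI, ← (IsFractionRing.injective R K).eq_iff, map_zero, hf, mul_eq_zero, or_iff_right hx0]
  by_cases hy0 : y = 0
  · simp [hy0]
  rw [hv_mul _ _ hx0 hy0]

theorem span_range_mkQ_eq_top_of_algebraMap_eq_mul
    (hv_mul : ∀ x y : K, x ≠ 0 → y ≠ 0 → v (x * y) = v x + v y)
    (hI : ∀ (n : ℕ) (f : R), f ∈ I n ↔ f = 0 ∨ (n : ℤ) ≤ v (algebraMap R K f))
    (hspan : ∀ y : K, (y = 0 ∨ 0 ≤ v y) → ∃ c : ι → R,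
      y - ∑ i, algebraMap R K (c i) * a i = 0 ∨ 0 < v (y - ∑ i, algebraMap R K (c i) * a i))
    (n : ℕ) {x : K} (hx0 : x ≠ 0) (hxv : v x = n) {b : ι → I n}
    (hb : ∀ i, algebraMap R K (b i) = x * a i) :
    Submodule.span R (Set.range
      fun i => Submodule.mkQ (Submodule.comap (I n).subtype (I (n + 1))) (b i)) = ⊤ := by
  set Q := Submodule.comap (I n).subtype (I (n + 1))
  refine eq_top_iff.2 fun q _ => ?_
  obtain ⟨f, rfl⟩ := Submodule.mkQ_surjective _ q
  have hf : algebraMap R K f = x * (algebraMap R K f / x) := (mul_div_cancel₀ _ hx0).symm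
  obtain ⟨c, hc⟩ := hspan (algebraMap R K f / x) <|
    (mem_iff_of_algebraMap_eq_mul hv_mul hI hx0 hf n).1 f.2 |>.imp_right fun h => by omega
  refine Submodule.mem_span_range_iff_exists_fun _ |>.2 ⟨c, ?_⟩
  rw [show ∑ i, c i • Q.mkQ (b i) = Q.mkQ (∑ i, c i • b i) by simp only [map_sum, map_smul],
    Submodule.mkQ_apply, Submodule.mkQ_apply, Submodule.Quotient.eq,
    Submodule.mem_comap, Submodule.coe_subtype, AddSubgroupClass.coe_sub, sub_mem_comm_iff]
  refine (mem_iff_of_algebraMap_eq_mul hv_mul hI hx0 ?_ _).2 (hc.imp_right fun h => by omega)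
  rw [map_sub, algebraMap_coe_sum_smul hb, mul_sub, ← hf]

variable [IsLocalRing R]

theorem linearIndependent_mkQ_of_algebraMap_eq_mul
    (hv_mul : ∀ x y : K, x ≠ 0 → y ≠ 0 → v (x * y) = v x + v y)
    (hI : ∀ (n : ℕ) (f : R), f ∈ I n ↔ f = 0 ∨ (n : ℤ) ≤ v (algebraMap R K f))
    (hind : ∀ c : ι → R, ((∑ i, algebraMap R K (c i) * a i) = 0 ∨
        0 < v (∑ i, algebraMap R K (c i) * a i)) → ∀ i, c i ∈ maximalIdeal R)
    (n : ℕ) [Module (R ⧸ maximalIdeal R) (↥(I n) ⧸ (Submodule.comap (I n).subtype (I (n + 1))))]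
    [IsScalarTower R (R ⧸ maximalIdeal R) (↥(I n) ⧸ (Submodule.comap (I n).subtype (I (n + 1))))]
    {x : K} (hx0 : x ≠ 0) (hxv : v x = n) {b : ι → I n}
    (hb : ∀ i, algebraMap R K (b i) = x * a i) :
    LinearIndependent (R ⧸ maximalIdeal R)
      fun i => Submodule.mkQ (Submodule.comap (I n).subtype (I (n + 1))) (b i) := by
  refine linearIndependent_quotient_of_forall_sum_smul_eq_zero fun c hc => hind c ?_
  set Q := Submodule.comap (I n).subtype (I (n + 1))
  rw [show ∑ i, c i • Q.mkQ (b i) = Q.mkQ (∑ i, c i • b i) by simp only [map_sum, map_smul],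
    Submodule.mkQ_apply, Submodule.Quotient.mk_eq_zero,
    Submodule.mem_comap, Submodule.coe_subtype] at hc
  exact (mem_iff_of_algebraMap_eq_mul hv_mul hI hx0 (algebraMap_coe_sum_smul hb c) _).1 hc
    |>.imp_right fun h => by omega

theorem rank_quotient_eq_card_of_isInteger
    (hv_mul : ∀ x y : K, x ≠ 0 → y ≠ 0 → v (x * y) = v x + v y)
    (hI : ∀ (n : ℕ) (f : R), f ∈ I n ↔ f = 0 ∨ (n : ℤ) ≤ v (algebraMap R K f))
    (ha : ∀ i, v (a i) = 0)
    (hspan : ∀ y : K, (y = 0 ∨ 0 ≤ v y) → ∃ c : ι → R,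
      y - ∑ i, algebraMap R K (c i) * a i = 0 ∨ 0 < v (y - ∑ i, algebraMap R K (c i) * a i))
    (hind : ∀ c : ι → R, ((∑ i, algebraMap R K (c i) * a i) = 0 ∨
        0 < v (∑ i, algebraMap R K (c i) * a i)) → ∀ i, c i ∈ maximalIdeal R)
    (n : ℕ) [Module (R ⧸ maximalIdeal R) (↥(I n) ⧸ (Submodule.comap (I n).subtype (I (n + 1))))]
    [IsScalarTower R (R ⧸ maximalIdeal R) (↥(I n) ⧸ (Submodule.comap (I n).subtype (I (n + 1))))]
    {x : K} (hx0 : x ≠ 0) (hxv : v x = n) (hxa : ∀ i, IsLocalization.IsInteger R (x * a i)) :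
    Module.rank (R ⧸ maximalIdeal R) (↥(I n) ⧸ (Submodule.comap (I n).subtype (I (n + 1)))) =
      Fintype.card ι := by
  choose b hb using hxa
  have hbI (i : ι) : b i ∈ I n :=
    (mem_iff_of_algebraMap_eq_mul hv_mul hI hx0 (hb i) n).2 (Or.inr (by rw [ha, hxv]; simp))
  have hspanR := span_range_mkQ_eq_top_of_algebraMap_eq_mul hv_mul hI hspan n hx0 hxv
    (b := fun i => ⟨b i, hbI i⟩) hb
  refine rank_eq_card_basis <| Module.Basis.mk
    (linearIndependent_mkQ_of_algebraMap_eq_mul hv_mul hI hind n hx0 hxv hb)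
    fun q _ => Submodule.span_le_restrictScalars R _ _ (hspanR ▸ Submodule.mem_top)

end ValuationIdeals

theorem stmt3 {R : Type} [CommRing R] [IsDomain R] [IsLocalRing R]
    (v : FractionRing R → ℤ)
    -- v is a valuation of the quotient field K = FractionRing R
    (hv_mul : ∀ x y : FractionRing R, x ≠ 0 → y ≠ 0 → v (x * y) = v x + v y)
    (hv_add : ∀ x y : FractionRing R, x ≠ 0 → y ≠ 0 → x + y ≠ 0 →
      min (v x) (v y) ≤ v (x + y))
    -- the value group is ℤ (ν is discrete)
    (hv_surj : ∀ m : ℤ, ∃ x : FractionRing R, x ≠ 0 ∧ v x = m)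
    -- ν dominates (R, m_R): V_ν ⊇ R and m_ν ∩ R = m_R
    (hdom : ∀ f : R, f ≠ 0 → 0 ≤ v (algebraMap R (FractionRing R) f))
    (hmax : ∀ f : R, f ≠ 0 →
      (f ∈ IsLocalRing.maximalIdeal R ↔ 0 < v (algebraMap R (FractionRing R) f)))
    -- the valuation ideals I_n = {f ∈ R : ν(f) ≥ n}
    (I : ℕ → Ideal R)
    (hI : ∀ (n : ℕ) (f : R), f ∈ I n ↔ f = 0 ∨ (n : ℤ) ≤ v (algebraMap R (FractionRing R) f))
    (r : ℕ)
    -- the residue field extension (V_ν/m_ν : R/m_R) has a basis of r elements: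
    -- a family a i of units of V_ν whose residues span V_ν/m_ν over R/m_R ...
    (a : Fin r → FractionRing R)
    (ha : ∀ i, a i ≠ 0 ∧ v (a i) = 0)
    (hspan : ∀ x : FractionRing R, (x = 0 ∨ 0 ≤ v x) → ∃ c : Fin r → R,
      x - ∑ i, algebraMap R (FractionRing R) (c i) * a i = 0 ∨
      0 < v (x - ∑ i, algebraMap R (FractionRing R) (c i) * a i))
    -- ... and whose residues are linearly independent over R/m_R
    (hind : ∀ c : Fin r → R,
      ((∑ i, algebraMap R (FractionRing R) (c i) * a i) = 0 ∨
        0 < v (∑ i, algebraMap R (FractionRing R) (c i) * a i)) →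
      ∀ i, c i ∈ IsLocalRing.maximalIdeal R)
    -- the residue field R/m_R acts on the quotients I_n/I_{n+1}, compatibly with R
    [instMod : ∀ n : ℕ, Module (R ⧸ IsLocalRing.maximalIdeal R)
      (↥(I n) ⧸ (Submodule.comap (I n).subtype (I (n + 1))))]
    [∀ n : ℕ, IsScalarTower R (R ⧸ IsLocalRing.maximalIdeal R)
      (↥(I n) ⧸ (Submodule.comap (I n).subtype (I (n + 1))))]
    :
    ∃ n₁ : ℕ, ∀ n : ℕ, n₁ ≤ n →
      Module.rank (R ⧸ IsLocalRing.maximalIdeal R)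
        (↥(I n) ⧸ (Submodule.comap (I n).subtype (I (n + 1)))) = (r : Cardinal) := by
  obtain ⟨z, hz0, hz⟩ := hv_surj 1
  obtain ⟨N, hN⟩ := exists_forall_ge_exists_map_eq_and_isInteger hv_mul hdom hz0 hz a
  refine ⟨N, fun n hn => ?_⟩
  obtain ⟨x, hx0, hxv, hxa⟩ := hN n hn
  rw [rank_quotient_eq_card_of_isInteger hv_mul hI (fun i => (ha i).2) hspan hind n
    ((map_ne_zero_iff _ (IsFractionRing.injective R _)).2 hx0) hxv hxa, Fintype.card_fin]
end

section
/- Let ν be an algebraic discrete valuation dominating a local domain (R, m_R) with V_ν/m_ν finite over R/m_R. Then lim_{n→∞} ℓ_R(R/I_n)/n² = 0. -/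
/-!
Fix `x` with `ν(x) = k`. Division by `x` maps `I_k` into the valuation ring `V_ν` and pulls
`m_ν` back to `I_{k+1}`, so `I_k/I_{k+1}` embeds `R`-linearly into the residue field `V_ν/m_ν`.
The latter is killed by `m_R` and spanned by `c` elements over `R`, hence
`dim_{R/m_R} I_k/I_{k+1} ≤ c`, so `ℓ_R(R/I_n) ≤ c n = o(n²)`.
-/

open Filter Topology

theorem tendsto_sum_range_div_sq_of_le {d : ℕ → ℕ} {c : ℕ} (hd : ∀ k, d k ≤ c) :
    Tendsto (fun n : ℕ => ((∑ k ∈ Finset.range n, d k : ℕ) : ℝ) / (n : ℝ) ^ 2)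
      atTop (𝓝 0) := by
  refine squeeze_zero (fun n => by positivity) (fun n => ?_)
    (tendsto_const_div_atTop_nhds_zero_nat (c : ℝ))
  have hsum : ((∑ k ∈ Finset.range n, d k : ℕ) : ℝ) ≤ n * c := by
    exact_mod_cast (Finset.sum_le_sum fun k _ => hd k).trans_eq (by simp)
  rcases Nat.eq_zero_or_pos n with rfl | hn
  · simp
  calc ((∑ k ∈ Finset.range n, d k : ℕ) : ℝ) / (n : ℝ) ^ 2
      ≤ n * c / (n : ℝ) ^ 2 := by gcongr
    _ = (c : ℝ) / n := by field_simp

theorem finrank_le_of_injective_of_span_eq_top {R M P : Type*} [CommRing R] {J : Ideal R}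
    [J.IsMaximal] [AddCommGroup M] [Module R M] [Module (R ⧸ J) M] [IsScalarTower R (R ⧸ J) M]
    [AddCommGroup P] [Module R P] (hP : Module.IsTorsionBySet R P J)
    {c : ℕ} {a : Fin c → P} (ha : Submodule.span R (Set.range a) = ⊤)
    {g : M →ₗ[R] P} (hg : Function.Injective g) : Module.finrank (R ⧸ J) M ≤ c := by
  let _ : Module (R ⧸ J) P := hP.module
  have ha' : Submodule.span (R ⧸ J) (Set.range a) = ⊤ := by
    rw [← Submodule.restrictScalars_eq_top_iff R,
      Submodule.restrictScalars_span R (R ⧸ J) Ideal.Quotient.mk_surjective, ha]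
  have : Module.Finite (R ⧸ J) P := by
    classical exact ⟨⟨Finset.univ.image a, by simpa using ha'⟩⟩
  calc Module.finrank (R ⧸ J) M ≤ Module.finrank (R ⧸ J) P :=
        LinearMap.finrank_le_finrank_of_injective
          (f := g.extendScalarsOfSurjective Ideal.Quotient.mk_surjective) hg
    _ ≤ c := by simpa using finrank_le_of_span_eq_top ha'

section OfInt

variable {K : Type*} [Field K] (v : K → ℤ)
  (hv_mul : ∀ x y : K, x ≠ 0 → y ≠ 0 → v (x * y) = v x + v y)
  (hv_add : ∀ x y : K, x ≠ 0 → y ≠ 0 → x + y ≠ 0 → min (v x) (v y) ≤ v (x + y))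

open Classical in
noncomputable def addValuationOfInt : AddValuation K (WithTop ℤ) :=
  AddValuation.of (fun x => if x = 0 then ⊤ else (v x : WithTop ℤ)) (if_pos rfl)
    (by
      have h := hv_mul 1 1 one_ne_zero one_ne_zero
      rw [one_mul] at h
      simp only [one_ne_zero, if_false, WithTop.coe_eq_zero]
      omega)
    (fun x y => by
      by_cases hx : x = 0
      · simp [hx]
      by_cases hy : y = 0
      · simp [hy]
      by_cases hxy : x + y = 0
      · simp [hxy]
      simp only [hx, hy, hxy, if_false]
      exact_mod_cast hv_add x y hx hy hxy)
    (fun x y => by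
      by_cases hx : x = 0
      · simp [hx]
      by_cases hy : y = 0
      · simp [hy]
      simp only [hx, hy, mul_eq_zero, or_self, if_false]
      exact_mod_cast hv_mul x y hx hy)

theorem addValuationOfInt_apply {x : K} (hx : x ≠ 0) :
    addValuationOfInt v hv_mul hv_add x = v x := by
  simp [addValuationOfInt, hx]

theorem coe_le_addValuationOfInt_iff {n : ℤ} {x : K} :
    (n : WithTop ℤ) ≤ addValuationOfInt v hv_mul hv_add x ↔ x = 0 ∨ n ≤ v x := by
  by_cases hx : x = 0 <;> simp [addValuationOfInt, hx]

end OfInt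

section Filtration

variable {R K : Type*} [CommRing R] [Field K] [Algebra R K] (w : AddValuation K (WithTop ℤ))
  (hR : ∀ r : R, 0 ≤ w (algebraMap R K r))

def valuationFiltration (n : ℤ) : Submodule R K where
  carrier := {y | (n : WithTop ℤ) ≤ w y}
  add_mem' {y z} hy hz := le_trans (le_min hy hz) (w.map_add y z)
  zero_mem' := by simp
  smul_mem' r y hy := by
    simp only [Set.mem_ofPred_eq, Algebra.smul_def, w.map_mul]
    exact le_add_of_nonneg_of_le (hR r) hy

theorem mem_valuationFiltration {n : ℤ} {y : K} :
    y ∈ valuationFiltration w hR n ↔ (n : WithTop ℤ) ≤ w y := Iff.rfl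

-- `𝒪 ⧸ 𝔪` is the residue field of `w`, seen only as an `R`-module.
local notation "𝒪" => valuationFiltration w hR 0
local notation "𝔪" => Submodule.comap (Submodule.subtype 𝒪) (valuationFiltration w hR 1)

theorem isTorsionBySet_valuationResidue {J : Ideal R}
    (hJ : ∀ r ∈ J, 1 ≤ w (algebraMap R K r)) : Module.IsTorsionBySet R (𝒪 ⧸ 𝔪) J := by
  rintro ⟨y⟩ ⟨r, hr⟩
  refine (Submodule.Quotient.mk_eq_zero _).mpr ?_
  show (1 : WithTop ℤ) ≤ w (r • (y : K))
  rw [Algebra.smul_def, w.map_mul]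
  exact le_add_of_le_of_nonneg (hJ r hr) y.2

theorem span_valuationResidue_eq_top {c : ℕ} {a : Fin c → K} (ha : ∀ i, 0 ≤ w (a i))
    (hspan : ∀ y : K, 0 ≤ w y → ∃ d : Fin c → R, 1 ≤ w (y - ∑ i, d i • a i)) :
    Submodule.span R (Set.range fun i => Submodule.mkQ 𝔪 ⟨a i, ha i⟩) = ⊤ := by
  refine Submodule.eq_top_iff'.mpr fun z => ?_
  obtain ⟨y, rfl⟩ := Submodule.mkQ_surjective 𝔪 z
  obtain ⟨d, hd⟩ := hspan y y.2
  have hy : Submodule.mkQ 𝔪 y = Submodule.mkQ 𝔪 (∑ i, d i • ⟨a i, ha i⟩) :=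
    (Submodule.Quotient.eq _).mpr (by simpa [mem_valuationFiltration] using hd)
  rw [hy, map_sum]
  exact Submodule.sum_mem _ fun i _ => by
    rw [map_smul]
    exact Submodule.smul_mem _ _ (Submodule.subset_span ⟨i, rfl⟩)

theorem coe_le_map_inv_mul_iff {n : ℤ} {x : K} (hx : w x = n) (m : ℤ) (y : K) :
    (m : WithTop ℤ) ≤ w (x⁻¹ * y) ↔ ((m + n : ℤ) : WithTop ℤ) ≤ w y := by
  rw [w.map_mul, w.map_inv, hx]
  induction w y using WithTop.recTopCoe with
  | top => simp
  | coe k => norm_cast; omega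

theorem exists_injective_valuationResidue {n : ℤ} {x : K} (hx : w x = n) {I I' : Ideal R}
    (hI : ∀ f, f ∈ I ↔ (n : WithTop ℤ) ≤ w (algebraMap R K f))
    (hI' : ∀ f, f ∈ I' ↔ ((n + 1 : ℤ) : WithTop ℤ) ≤ w (algebraMap R K f)) :
    ∃ g : (I ⧸ Submodule.comap I.subtype I') →ₗ[R] 𝒪 ⧸ 𝔪, Function.Injective g := by
  let φ : I →ₗ[R] 𝒪 :=
    (LinearMap.mulLeft R x⁻¹ ∘ₗ Algebra.linearMap R K ∘ₗ I.subtype).codRestrict 𝒪 fun f => (coe_le_map_inv_mul_iff w hx 0 _).mpr (by simpa using (hI f).mp f.2)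
  have hφ : Submodule.comap φ 𝔪 = Submodule.comap I.subtype I' := by
    ext f
    change ((1 : ℤ) : WithTop ℤ) ≤ w (x⁻¹ * algebraMap R K f) ↔ (f : R) ∈ I'
    rw [coe_le_map_inv_mul_iff w hx, hI', add_comm]
  refine ⟨Submodule.mapQ _ _ φ hφ.ge, ?_⟩
  rw [← LinearMap.ker_eq_bot, Submodule.ker_mapQ, hφ, Submodule.mkQ_map_self]

theorem finrank_quotient_le_of_residue_span (hR : ∀ r : R, 0 ≤ w (algebraMap R K r))
    {J : Ideal R} [J.IsMaximal] (hJ : ∀ r ∈ J, 1 ≤ w (algebraMap R K r))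
    {c : ℕ} {a : Fin c → K} (ha : ∀ i, 0 ≤ w (a i))
    (hspan : ∀ y : K, 0 ≤ w y → ∃ d : Fin c → R, 1 ≤ w (y - ∑ i, d i • a i))
    {n : ℤ} {x : K} (hx : w x = n) {I I' : Ideal R}
    (hI : ∀ f, f ∈ I ↔ (n : WithTop ℤ) ≤ w (algebraMap R K f))
    (hI' : ∀ f, f ∈ I' ↔ ((n + 1 : ℤ) : WithTop ℤ) ≤ w (algebraMap R K f))
    [Module (R ⧸ J) (I ⧸ Submodule.comap I.subtype I')]
    [IsScalarTower R (R ⧸ J) (I ⧸ Submodule.comap I.subtype I')] :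
    Module.finrank (R ⧸ J) (I ⧸ Submodule.comap I.subtype I') ≤ c := by
  obtain ⟨g, hg⟩ := exists_injective_valuationResidue w hR hx hI hI'
  exact finrank_le_of_injective_of_span_eq_top (isTorsionBySet_valuationResidue w hR hJ)
    (span_valuationResidue_eq_top w hR ha hspan) hg

end Filtration

theorem stmt5 {R : Type} [CommRing R] [IsDomain R] [IsLocalRing R]
    (v : FractionRing R → ℤ)
    -- v is a valuation of the quotient field K = FractionRing R
    (hv_mul : ∀ x y : FractionRing R, x ≠ 0 → y ≠ 0 → v (x * y) = v x + v y)
    (hv_add : ∀ x y : FractionRing R, x ≠ 0 → y ≠ 0 → x + y ≠ 0 →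
      min (v x) (v y) ≤ v (x + y))
    -- the value group is ℤ (ν is discrete)
    (hv_surj : ∀ m : ℤ, ∃ x : FractionRing R, x ≠ 0 ∧ v x = m)
    -- ν dominates (R, m_R): V_ν ⊇ R and m_ν ∩ R = m_R
    (hdom : ∀ f : R, f ≠ 0 → 0 ≤ v (algebraMap R (FractionRing R) f))
    (hmax : ∀ f : R, f ≠ 0 →
      (f ∈ IsLocalRing.maximalIdeal R ↔ 0 < v (algebraMap R (FractionRing R) f)))
    -- the valuation ideals I_n = {f ∈ R : ν(f) ≥ n}
    (I : ℕ → Ideal R)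
    (hI : ∀ (n : ℕ) (f : R), f ∈ I n ↔ f = 0 ∨ (n : ℤ) ≤ v (algebraMap R (FractionRing R) f))
    (c : ℕ)
    -- the residue field extension (V_ν/m_ν : R/m_R) has a basis of c elements:
    -- a family a i of units of V_ν whose residues span V_ν/m_ν over R/m_R ...
    (a : Fin c → FractionRing R)
    (ha : ∀ i, a i ≠ 0 ∧ v (a i) = 0)
    (hspan : ∀ x : FractionRing R, (x = 0 ∨ 0 ≤ v x) → ∃ c : Fin c → R,
      x - ∑ i, algebraMap R (FractionRing R) (c i) * a i = 0 ∨
      0 < v (x - ∑ i, algebraMap R (FractionRing R) (c i) * a i))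
    -- ... and whose residues are linearly independent over R/m_R
    (hind : ∀ c : Fin c → R,
      ((∑ i, algebraMap R (FractionRing R) (c i) * a i) = 0 ∨
        0 < v (∑ i, algebraMap R (FractionRing R) (c i) * a i)) →
      ∀ i, c i ∈ IsLocalRing.maximalIdeal R)
    -- the residue field R/m_R acts on the quotients I_n/I_{n+1}, compatibly with R
    [instMod : ∀ n : ℕ, Module (R ⧸ IsLocalRing.maximalIdeal R)
      (↥(I n) ⧸ (Submodule.comap (I n).subtype (I (n + 1))))]
    [∀ n : ℕ, IsScalarTower R (R ⧸ IsLocalRing.maximalIdeal R)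
      (↥(I n) ⧸ (Submodule.comap (I n).subtype (I (n + 1))))]
    :
    Filter.Tendsto (fun n : ℕ =>
      ((∑ k ∈ Finset.range n, Module.finrank (R ⧸ IsLocalRing.maximalIdeal R)
        (↥(I k) ⧸ (Submodule.comap (I k).subtype (I (k + 1)))) : ℕ) : ℝ) / (n : ℝ) ^ 2)
      Filter.atTop (nhds 0) := by
  set w := addValuationOfInt v hv_mul hv_add
  have hw_iff (n : ℤ) (y : FractionRing R) : (n : WithTop ℤ) ≤ w y ↔ y = 0 ∨ n ≤ v y :=
    coe_le_addValuationOfInt_iff v hv_mul hv_add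
  have hwR (n : ℤ) (f : R) : (n : WithTop ℤ) ≤ w (algebraMap R _ f) ↔
      f = 0 ∨ n ≤ v (algebraMap R _ f) := by
    rw [hw_iff, IsFractionRing.to_map_eq_zero_iff]
  have hR (r : R) : 0 ≤ w (algebraMap R _ r) := (hwR 0 r).mpr (or_iff_not_imp_left.mpr (hdom r))
  have hJ (r : R) (hr : r ∈ IsLocalRing.maximalIdeal R) : 1 ≤ w (algebraMap R _ r) :=
    (hwR 1 r).mpr (or_iff_not_imp_left.mpr fun h0 => (hmax r h0).mp hr)
  have ha' (i : Fin c) : 0 ≤ w (a i) := (hw_iff 0 _).mpr (Or.inr (ha i).2.ge)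
  have hspan' (y : FractionRing R) (hy : 0 ≤ w y) :
      ∃ d : Fin c → R, 1 ≤ w (y - ∑ i, d i • a i) := by
    obtain ⟨d, hd⟩ := hspan y ((hw_iff 0 y).mp hy)
    refine ⟨d, (hw_iff 1 _).mpr ?_⟩
    simp only [Algebra.smul_def]
    exact hd.imp_right fun h => by omega
  have hIw (n : ℕ) (f : R) : f ∈ I n ↔ ((n : ℤ) : WithTop ℤ) ≤ w (algebraMap R _ f) :=
    (hI n f).trans (hwR n f).symm
  refine tendsto_sum_range_div_sq_of_le (c := c) fun k => ?_
  obtain ⟨x, hx0, hx⟩ := hv_surj k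
  exact finrank_quotient_le_of_residue_span w hR hJ ha' hspan'
    ((addValuationOfInt_apply v hv_mul hv_add hx0).trans (congrArg _ hx)) (hIw k)
    (by exact_mod_cast hIw (k + 1))
end

section
/- Let {r_i}_{i≥0} be positive integers with r_0 = r_1 = 1 and, for each i ≥ 2, 2r_i > r_0 + ⋯ + r_i and r_{i+1} > 2r_i. For n ∈ ℕ define α(n) to be the number of tuples (n_0, n_1, …, n_m) with n_0 ∈ ℕ, n_1, …, n_m ∈ {0,1}, and n_0 + n_1 r_1 + ⋯ + n_m r_m = n (for m large enough that r_{m+1} > n; this count is independent of such m). Then for every i ≥ 1 and every integer s with r_0 + r_1 + ⋯ + r_i < s < r_{i+1}, one has α(s) = 2^i. -/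
/-!
A representation of `n` is determined by the set `T` of indices `k ≥ 1` with `n_k = 1`, the free
digit being forced to be `n_0 = n - ∑_{k ∈ T} r_k`; so representations of `n` correspond to the
sets `T ∌ 0` with `∑_{k ∈ T} r_k ≤ n`. When `r_0 + ⋯ + r_i < s < r_{i+1}`, growth of `r` makes
every `r_k` with `k > i` exceed `s`, while all of `r_1, …, r_i` together fit below `s`; hence the
admissible `T` are exactly the `2^i` subsets of `{1, …, i}`.
-/

open Finset

section Representations

variable (r : ℕ → ℕ)

def IsRepresentation (n : ℕ) (g : ℕ →₀ ℕ) : Prop :=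
  (∀ k, 1 ≤ k → g k ≤ 1) ∧ g 0 + ∑ k ∈ g.support.erase 0, g k * r k = n

noncomputable def digitsOf (c : ℕ) (T : Finset ℕ) : ℕ →₀ ℕ :=
  Finsupp.onFinset (insert 0 T) (fun k => if k = 0 then c else if k ∈ T then 1 else 0) (by
    intro k hk
    by_cases h : k = 0 <;> simp_all)

section DigitsOf

variable {c : ℕ} {T : Finset ℕ} {k : ℕ}

@[simp]
lemma digitsOf_zero : digitsOf c T 0 = c := by
  simp [digitsOf]

lemma digitsOf_of_ne_zero (hk : k ≠ 0) : digitsOf c T k = if k ∈ T then 1 else 0 := by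
  simp [digitsOf, hk]

lemma support_erase_zero_digitsOf (hT : 0 ∉ T) : (digitsOf c T).support.erase 0 = T := by
  ext k
  by_cases hk : k = 0
  · simp [hk, hT]
  · simp [hk, digitsOf_of_ne_zero hk]

end DigitsOf

section BinaryDigits

variable {g : ℕ →₀ ℕ}

lemma eq_one_of_mem_support_erase_zero (hg : ∀ k, 1 ≤ k → g k ≤ 1) {k : ℕ}
    (hk : k ∈ g.support.erase 0) : g k = 1 := by
  simp only [mem_erase, Finsupp.mem_support_iff] at hk
  have := hg k (Nat.one_le_iff_ne_zero.mpr hk.1)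
  omega

lemma sum_support_erase_zero_mul_eq (hg : ∀ k, 1 ≤ k → g k ≤ 1) :
    ∑ k ∈ g.support.erase 0, g k * r k = ∑ k ∈ g.support.erase 0, r k :=
  sum_congr rfl fun k hk => by rw [eq_one_of_mem_support_erase_zero hg hk, one_mul]

lemma digitsOf_support_erase_zero (hg : ∀ k, 1 ≤ k → g k ≤ 1) :
    digitsOf (g 0) (g.support.erase 0) = g := by
  ext k
  by_cases hk : k = 0
  · simp [hk]
  · rw [digitsOf_of_ne_zero hk]
    split_ifs with hmem
    · exact (eq_one_of_mem_support_erase_zero hg hmem).symm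
    · simp only [mem_erase, Finsupp.mem_support_iff, not_and, not_not] at hmem
      exact (hmem hk).symm

end BinaryDigits

lemma isRepresentation_digitsOf {n : ℕ} {T : Finset ℕ} (hT0 : 0 ∉ T) (hTn : ∑ k ∈ T, r k ≤ n) :
    IsRepresentation r n (digitsOf (n - ∑ k ∈ T, r k) T) := by
  refine ⟨fun k hk => ?_, ?_⟩
  · rw [digitsOf_of_ne_zero (Nat.one_le_iff_ne_zero.mp hk)]
    split_ifs <;> omega
  · have hdigits : ∀ k ∈ T, digitsOf (n - ∑ k ∈ T, r k) T k * r k = r k := fun k hk => by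
      rw [digitsOf_of_ne_zero (ne_of_mem_of_not_mem hk hT0), if_pos hk, one_mul]
    rw [support_erase_zero_digitsOf hT0, digitsOf_zero, sum_congr rfl hdigits]
    exact Nat.sub_add_cancel hTn

noncomputable def representationEquiv (n : ℕ) :
    {g // IsRepresentation r n g} ≃ {T : Finset ℕ // 0 ∉ T ∧ ∑ k ∈ T, r k ≤ n} where
  toFun g := ⟨g.1.support.erase 0, notMem_erase 0 _, by
    obtain ⟨g, hg, hsum⟩ := g
    rw [← sum_support_erase_zero_mul_eq r hg]
    omega⟩
  invFun T := ⟨digitsOf (n - ∑ k ∈ T.1, r k) T.1, isRepresentation_digitsOf r T.2.1 T.2.2⟩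
  left_inv g := by
    obtain ⟨g, hg, hsum⟩ := g
    have hg0 : n - ∑ k ∈ g.support.erase 0, r k = g 0 := by
      rw [← sum_support_erase_zero_mul_eq r hg]
      omega
    exact Subtype.ext (by simpa only [hg0] using digitsOf_support_erase_zero hg)
  right_inv T := Subtype.ext (support_erase_zero_digitsOf T.2.1)

lemma card_representations_eq_two_pow {n : ℕ} (I : Finset ℕ) (hI0 : 0 ∉ I)
    (hlarge : ∀ k, k ≠ 0 → k ∉ I → n < r k) (hsum : ∑ k ∈ I, r k ≤ n) :
    Nat.card {g // IsRepresentation r n g} = 2 ^ #I := by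
  have hparts : ∀ T : Finset ℕ, 0 ∉ T ∧ ∑ k ∈ T, r k ≤ n ↔ T ∈ I.powerset := by
    intro T
    rw [mem_powerset]
    constructor
    · rintro ⟨hT0, hTn⟩ k hk
      by_contra hkI
      have := single_le_sum (fun j _ => Nat.zero_le (r j)) hk
      have := hlarge k (ne_of_mem_of_not_mem hk hT0) hkI
      omega
    · intro hTI
      exact ⟨fun h => hI0 (hTI h), (sum_le_sum_of_subset hTI).trans hsum⟩
  rw [Nat.card_congr ((representationEquiv r n).trans (Equiv.subtypeEquivRight hparts)),
    Nat.card_eq_finsetCard, card_powerset]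

end Representations

theorem stmt10_general
    (r : ℕ → ℕ)
    (hgrow : ∀ i : ℕ, 1 ≤ i → 2 * r i < r (i + 1))
    -- α n counts the representations n = n_0 + Σ_{k≥1} n_k r_k with n_0 ∈ ℕ and
    -- n_k ∈ {0,1} for k ≥ 1 (finitely many nonzero)
    (α : ℕ → ℕ)
    (hα : ∀ n : ℕ, α n = Nat.card {g : ℕ →₀ ℕ //
      (∀ k : ℕ, 1 ≤ k → g k ≤ 1) ∧ g 0 + ∑ k ∈ g.support.erase 0, g k * r k = n})
    :
    ∀ i : ℕ, 1 ≤ i → ∀ s : ℕ, (∑ j ∈ Finset.range (i + 1), r j) < s → s < r (i + 1) →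
      α s = 2 ^ i := by
  intro i hi s hsum hs
  have hmono : MonotoneOn r (Set.Ici 1) :=
    monotoneOn_nat_Ici_of_le_succ fun k hk => (hgrow k hk).le.trans' (by omega)
  have hlarge : ∀ k, k ≠ 0 → k ∉ Icc 1 i → s < r k := fun k hk0 hki => by
    have hik : i + 1 ≤ k := by simp only [mem_Icc] at hki; omega
    exact hs.trans_le (hmono (Set.mem_Ici.mpr (by omega)) (Set.mem_Ici.mpr (by omega)) hik)
  have hIcc : ∑ k ∈ Icc 1 i, r k ≤ s :=
    (sum_le_sum_of_subset fun k hk => by simp only [mem_Icc, mem_range] at hk ⊢; omega).trans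
      hsum.le
  rw [hα]
  exact (card_representations_eq_two_pow r (Icc 1 i) (by simp) hlarge hIcc).trans (by simp)

theorem stmt10
    (r : ℕ → ℕ) (hr0 : r 0 = 1) (hr1 : r 1 = 1)
    (hgrow : ∀ i : ℕ, 1 ≤ i → 2 * r i < r (i + 1))
    (hbig : ∀ i : ℕ, 2 ≤ i → (∑ j ∈ Finset.range (i + 1), r j) < 2 * r i)
    -- α n counts the representations n = n_0 + Σ_{k≥1} n_k r_k with n_0 ∈ ℕ and
    -- n_k ∈ {0,1} for k ≥ 1 (finitely many nonzero)
    (α : ℕ → ℕ)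
    (hα : ∀ n : ℕ, α n = Nat.card {g : ℕ →₀ ℕ //
      (∀ k : ℕ, 1 ≤ k → g k ≤ 1) ∧ g 0 + ∑ k ∈ g.support.erase 0, g k * r k = n})
    :
    ∀ i : ℕ, 1 ≤ i → ∀ s : ℕ, (∑ j ∈ Finset.range (i + 1), r j) < s → s < r (i + 1) →
      α s = 2 ^ i :=
  stmt10_general r hgrow α hα
end

section
/- Let {r_i} and α be as follows: r_0 = r_1 = 1, r_{i+1} > 2r_i for i ≥ 1, 2r_i > r_0 + ⋯ + r_i for i ≥ 2, and α(n) is the number of tuples (n_0, n_1, …) with n_0 ∈ ℕ, n_k ∈ {0,1} for k ≥ 1 (finitely many nonzero), and n_0 + Σ_{k≥1} n_k r_k = n. Then for every n ≥ 1, letting i be the unique index with r_i ≤ n < r_{i+1}, one has α(n) = α(r_i − 1) + min{α(r_i − 1), α(n − r_i)}. -/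
/-!
A representation is determined by its index set `S = {k ≥ 1 | n_k = 1}`, since then
`n_0 = n - ∑_{k ∈ S} r_k`; so `α n` counts the sets `S ⊆ {1, 2, …}` with `∑_{k ∈ S} r_k ≤ n`.
The hypothesis `2 r_i > r_0 + ⋯ + r_i` makes `r` superincreasing from index 1 on:
`r_1 + ⋯ + r_{i-1} < r_i`. Hence for `n < r_{i+1}` only indices `k ≤ i` occur, and for
`n < r_i` only `k < i`, where every subset of `{1, …, i-1}` is admissible as soon as
`n ≥ r_i - 1`. Splitting the sets counted by `α n` according to whether they contain `i` gives
`2^{i-1} = α(r_i - 1)` sets without `i`, and with `i` the sets `S ⊆ {1, …, i-1}` with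
`∑_S r_k ≤ n - r_i`, of which there are `α(min(r_i - 1, n - r_i)) = min(α(r_i - 1), α(n - r_i))`.
-/

open Finset

noncomputable def repCount (r : ℕ → ℕ) (n : ℕ) : ℕ :=
  Nat.card {g : ℕ →₀ ℕ //
    (∀ k : ℕ, 1 ≤ k → g k ≤ 1) ∧ g 0 + ∑ k ∈ g.support.erase 0, g k * r k = n}

lemma apply_eq_ite_of_le_one {g : ℕ →₀ ℕ} (hg : ∀ k, 1 ≤ k → g k ≤ 1) {k : ℕ} (hk : k ≠ 0) :
    g k = if k ∈ g.support.erase 0 then 1 else 0 := by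
  have := hg k (Nat.one_le_iff_ne_zero.2 hk)
  split_ifs with h <;> simp_all; omega

lemma sum_support_erase_zero_mul_of_le_one {g : ℕ →₀ ℕ} (hg : ∀ k, 1 ≤ k → g k ≤ 1)
    (r : ℕ → ℕ) :
    ∑ k ∈ g.support.erase 0, g k * r k = ∑ k ∈ g.support.erase 0, r k := by
  refine Finset.sum_congr rfl fun k hk => ?_
  rw [apply_eq_ite_of_le_one hg (ne_of_mem_erase hk), if_pos hk, one_mul]

noncomputable def repOfIndexSet (c : ℕ) (S : Finset ℕ) : ℕ →₀ ℕ :=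
  Finsupp.single 0 c + ∑ j ∈ S, Finsupp.single j 1

lemma repOfIndexSet_apply {S : Finset ℕ} (hS : 0 ∉ S) (c k : ℕ) :
    repOfIndexSet c S k = if k = 0 then c else if k ∈ S then 1 else 0 := by
  rcases eq_or_ne k 0 with rfl | hk
  · simp [repOfIndexSet, Finsupp.single_apply, hS]
  · simp [repOfIndexSet, Finsupp.single_apply, hk, eq_comm]

lemma support_erase_zero_repOfIndexSet {S : Finset ℕ} (hS : 0 ∉ S) (c : ℕ) :
    (repOfIndexSet c S).support.erase 0 = S := by
  ext k
  rcases eq_or_ne k 0 with rfl | hk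
  · simp [hS]
  · simp [repOfIndexSet_apply hS, hk]

lemma repCount_eq_natCard_indexSets (r : ℕ → ℕ) (n : ℕ) :
    repCount r n = Nat.card {S : Finset ℕ // 0 ∉ S ∧ ∑ k ∈ S, r k ≤ n} := by
  refine Nat.card_congr
    { toFun := fun g => ⟨g.1.support.erase 0, notMem_erase 0 _, ?_⟩
      invFun := fun S => ⟨repOfIndexSet (n - ∑ k ∈ S.1, r k) S.1, ?_, ?_⟩
      left_inv := ?_
      right_inv := ?_ }
  · obtain ⟨g, hg, hsum⟩ := g
    show ∑ k ∈ g.support.erase 0, r k ≤ n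
    rw [sum_support_erase_zero_mul_of_le_one hg] at hsum
    omega
  · intro k hk
    rw [repOfIndexSet_apply S.2.1]
    split_ifs <;> omega
  · obtain ⟨S, hS0, hS⟩ := S
    dsimp only
    have hsum : ∑ k ∈ S, repOfIndexSet (n - ∑ k ∈ S, r k) S k * r k = ∑ k ∈ S, r k :=
      Finset.sum_congr rfl fun k hk => by
        rw [repOfIndexSet_apply hS0, if_neg (ne_of_mem_of_not_mem hk hS0), if_pos hk, one_mul]
    rw [support_erase_zero_repOfIndexSet hS0, hsum, repOfIndexSet_apply hS0, if_pos rfl]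
    omega
  · rintro ⟨g, hg, hsum⟩
    rw [sum_support_erase_zero_mul_of_le_one hg] at hsum
    ext k
    dsimp only
    rw [repOfIndexSet_apply (notMem_erase 0 _)]
    rcases eq_or_ne k 0 with rfl | hk
    · simp only [↓reduceIte]
      omega
    · rw [if_neg hk, ← apply_eq_ite_of_le_one hg hk]
  · rintro ⟨S, hS⟩
    exact Subtype.ext (support_erase_zero_repOfIndexSet hS.1 _)

section SubsetSums

variable {α : Type*} {s : Finset α} (w : α → ℕ)

lemma card_filter_powerset_insert_sum_le [DecidableEq α] {a : α} (ha : a ∉ s) {n : ℕ}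
    (hn : w a ≤ n) :
    #{t ∈ (insert a s).powerset | ∑ k ∈ t, w k ≤ n} =
      #{t ∈ s.powerset | ∑ k ∈ t, w k ≤ n} + #{t ∈ s.powerset | ∑ k ∈ t, w k ≤ n - w a} := by
  simp only [card_filter]
  rw [sum_powerset_insert ha]
  congr 1
  refine Finset.sum_congr rfl fun t ht => ?_
  rw [sum_insert (notMem_mono (mem_powerset.1 ht) ha)]
  congr 1
  exact propext (by omega)

lemma filter_powerset_sum_le_min {M : ℕ} (hs : ∑ k ∈ s, w k ≤ M) (m : ℕ) :
    {t ∈ s.powerset | ∑ k ∈ t, w k ≤ min M m} = {t ∈ s.powerset | ∑ k ∈ t, w k ≤ m} := by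
  refine filter_congr fun t ht => ?_
  have := sum_le_sum_of_subset (f := w) (mem_powerset.1 ht)
  rw [le_min_iff]
  omega

end SubsetSums

def Superincreasing (r : ℕ → ℕ) : Prop :=
  ∀ i, 1 ≤ i → ∑ j ∈ Ico 1 i, r j < r i

namespace Superincreasing

variable {r : ℕ → ℕ}

lemma strictMonoOn (hsup : Superincreasing r) : StrictMonoOn r (Set.Ici 1) :=
  fun _ ha b _ hab => (single_le_sum (fun _ _ => Nat.zero_le _) (mem_Ico.2 ⟨ha, hab⟩)).trans_lt
    (hsup b (ha.trans hab.le))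

lemma lt_apply_succ (hsup : Superincreasing r) (n : ℕ) : n < r (n + 1) := by
  induction n with
  | zero => simpa using hsup 1 le_rfl
  | succ n ih =>
    have : r (n + 1) < r (n + 1 + 1) := hsup.strictMonoOn
      (Nat.le_add_left 1 n) (Nat.le_add_left 1 (n + 1)) (Nat.lt_succ_self (n + 1))
    omega

lemma repCount_eq_card_filter_powerset_Ico (hsup : Superincreasing r)
    {i n : ℕ} (hi : 1 ≤ i) (hn : n < r i) :
    repCount r n = #{S ∈ (Ico 1 i).powerset | ∑ k ∈ S, r k ≤ n} := by
  rw [repCount_eq_natCard_indexSets, ← Nat.card_eq_finsetCard]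
  refine Nat.card_congr (Equiv.subtypeEquivRight fun S => ?_)
  simp only [mem_filter, mem_powerset]
  refine ⟨fun ⟨h0, hS⟩ => ⟨fun k hk => ?_, hS⟩,
    fun ⟨hS, hsum⟩ => ⟨fun h0 => by simpa using hS h0, hsum⟩⟩
  have hk1 : 1 ≤ k := Nat.one_le_iff_ne_zero.2 (ne_of_mem_of_not_mem hk h0)
  have hrk : r k < r i := ((single_le_sum (fun _ _ => Nat.zero_le _) hk).trans hS).trans_lt hn
  exact mem_Ico.2 ⟨hk1, hsup.strictMonoOn.lt_iff_lt hk1 hi |>.1 hrk⟩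

lemma monotone_repCount (hsup : Superincreasing r) : Monotone (repCount r) := fun m m' hmm' => by
  have hm' := hsup.lt_apply_succ m'
  rw [hsup.repCount_eq_card_filter_powerset_Ico (Nat.le_add_left 1 m') (hmm'.trans_lt hm'),
    hsup.repCount_eq_card_filter_powerset_Ico (Nat.le_add_left 1 m') hm']
  exact card_le_card (monotone_filter_right _ fun _ _ h => h.trans hmm')

theorem repCount_eq_add_min (hsup : Superincreasing r)
    {i n : ℕ} (hi : 1 ≤ i) (hin : r i ≤ n) (hni : n < r (i + 1)) :
    repCount r n = repCount r (r i - 1) + min (repCount r (r i - 1)) (repCount r (n - r i)) := by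
  have hs : ∑ k ∈ Ico 1 i, r k ≤ r i - 1 := Nat.le_sub_one_of_lt (hsup i hi)
  have hcount : ∀ m, repCount r (min (r i - 1) m) =
      #{S ∈ (Ico 1 i).powerset | ∑ k ∈ S, r k ≤ m} := fun m => by
    rw [hsup.repCount_eq_card_filter_powerset_Ico hi (by have := hsup i hi; omega),
      filter_powerset_sum_le_min r hs]
  have hsplit : repCount r n = #{S ∈ (Ico 1 i).powerset | ∑ k ∈ S, r k ≤ n} +
      #{S ∈ (Ico 1 i).powerset | ∑ k ∈ S, r k ≤ n - r i} := by
    rw [hsup.repCount_eq_card_filter_powerset_Ico (Nat.le_add_left 1 i) hni,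
      Nat.Ico_succ_right_eq_insert_Ico hi, card_filter_powerset_insert_sum_le r (by simp) hin]
  rw [hsplit, ← hcount n, ← hcount (n - r i), min_eq_left (show r i - 1 ≤ n by omega),
    hsup.monotone_repCount.map_min]

end Superincreasing

lemma superincreasing_of_sum_range_lt_two_mul {r : ℕ → ℕ} (hr1 : 0 < r 1)
    (hbig : ∀ i, 2 ≤ i → ∑ j ∈ range (i + 1), r j < 2 * r i) : Superincreasing r := by
  intro i hi
  obtain rfl | hi2 := hi.eq_or_lt
  · simpa using hr1
  · have := hbig i hi2
    rw [sum_range_succ, sum_range_eq_add_Ico _ hi] at this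
    omega

theorem stmt11_general
    (r : ℕ → ℕ) (hr1 : r 1 = 1)
    (hbig : ∀ i : ℕ, 2 ≤ i → (∑ j ∈ Finset.range (i + 1), r j) < 2 * r i)
    -- α n counts the representations n = n_0 + Σ_{k≥1} n_k r_k with n_0 ∈ ℕ and
    -- n_k ∈ {0,1} for k ≥ 1 (finitely many nonzero)
    (α : ℕ → ℕ)
    (hα : ∀ n : ℕ, α n = Nat.card {g : ℕ →₀ ℕ //
      (∀ k : ℕ, 1 ≤ k → g k ≤ 1) ∧ g 0 + ∑ k ∈ g.support.erase 0, g k * r k = n})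
    :
    ∀ n : ℕ, 1 ≤ n → ∀ i : ℕ, r i ≤ n → n < r (i + 1) →
      α n = α (r i - 1) + min (α (r i - 1)) (α (n - r i)) := by
  obtain rfl : α = repCount r := funext hα
  intro n hn i hin hni
  have hi : 1 ≤ i := Nat.one_le_iff_ne_zero.2 fun hi0 => by
    rw [hi0, zero_add, hr1] at hni
    omega
  exact (superincreasing_of_sum_range_lt_two_mul (by omega) hbig).repCount_eq_add_min hi hin hni

theorem stmt11
    (r : ℕ → ℕ) (hr0 : r 0 = 1) (hr1 : r 1 = 1)
    (hgrow : ∀ i : ℕ, 1 ≤ i → 2 * r i < r (i + 1))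
    (hbig : ∀ i : ℕ, 2 ≤ i → (∑ j ∈ Finset.range (i + 1), r j) < 2 * r i)
    -- α n counts the representations n = n_0 + Σ_{k≥1} n_k r_k with n_0 ∈ ℕ and
    -- n_k ∈ {0,1} for k ≥ 1 (finitely many nonzero)
    (α : ℕ → ℕ)
    (hα : ∀ n : ℕ, α n = Nat.card {g : ℕ →₀ ℕ //
      (∀ k : ℕ, 1 ≤ k → g k ≤ 1) ∧ g 0 + ∑ k ∈ g.support.erase 0, g k * r k = n})
    :
    ∀ n : ℕ, 1 ≤ n → ∀ i : ℕ, r i ≤ n → n < r (i + 1) →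
      α n = α (r i - 1) + min (α (r i - 1)) (α (n - r i)) :=
  stmt11_general r hr1 hbig α hα
end

section
/- Let θ ∈ ℝ_{≥0}, let e_2 = ⌊2θ⌋, e_j ∈ {0,1} for j ≥ 3 the greedy binary digits of θ (so that R_i := θ − Σ_{k=2}^{i} e_k 2^{1−k} satisfies 0 ≤ R_i < 2^{1−i}), and define r_i = 2^i − 1 + Σ_{k=2}^{i} e_k 2^{i−k} for i ≥ 1. Then for all i ≥ 2, 2^{i−1}/r_i = 1/(2+θ) + ε_i where ε_i = (R_i + 2^{1−i}) / ((2+θ)(2+θ − R_i − 2^{1−i})) > 0. -/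
/-! With `S = Σ_{k=2}^{i} e_k 2^{1-k}` and `δ = 2^{1-i}`, the integer `r_i` equals
`2^{i-1} (2 + S - δ)`, so `2^{i-1}/r_i = 1/(2 + θ - x)` with `x = R_i + δ = θ - S + δ`.
The claimed identity is then `1/(A - x) = 1/A + x/(A (A - x))` for `A = 2 + θ`, and the
positivity of `ε_i` comes from `0 < x < A`, i.e. from `R_i ≥ 0` and `δ < 2 + S`. -/

lemma pow_sub_eq_zpow_mul_zpow {G₀ : Type*} [GroupWithZero G₀] {a : G₀} (ha : a ≠ 0)
    {i k : ℕ} (hk : k ≤ i) : a ^ (i - k) = a ^ ((i : ℤ) - 1) * a ^ (1 - (k : ℤ)) := by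
  rw [← zpow_add₀ ha, ← zpow_natCast]
  congr 1
  omega

lemma cast_two_pow_sub_one_add_sum (e : ℕ → ℕ) (i : ℕ) :
    ((2 ^ i - 1 + ∑ k ∈ Finset.Icc 2 i, e k * 2 ^ (i - k) : ℕ) : ℝ) =
      2 ^ ((i : ℤ) - 1) *
        (2 + ∑ k ∈ Finset.Icc 2 i, (e k : ℝ) * 2 ^ ((1 : ℤ) - k) - 2 ^ ((1 : ℤ) - i)) := by
  have h2 : (2 : ℝ) ≠ 0 := two_ne_zero
  have hsum : ∑ k ∈ Finset.Icc 2 i, (e k : ℝ) * 2 ^ (i - k) =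
      2 ^ ((i : ℤ) - 1) * ∑ k ∈ Finset.Icc 2 i, (e k : ℝ) * 2 ^ ((1 : ℤ) - k) := by
    rw [Finset.mul_sum]
    refine Finset.sum_congr rfl fun k hk => ?_
    rw [pow_sub_eq_zpow_mul_zpow h2 (Finset.mem_Icc.mp hk).2]
    ring
  have hpow : (2 : ℝ) ^ i = 2 ^ ((i : ℤ) - 1) * 2 := by
    rw [← zpow_natCast, ← zpow_add_one₀ h2, sub_add_cancel]
  have hcancel : (2 : ℝ) ^ ((i : ℤ) - 1) * 2 ^ ((1 : ℤ) - i) = 1 := by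
    rw [← zpow_add₀ h2, sub_add_sub_cancel', sub_self, zpow_zero]
  push_cast [Nat.one_le_two_pow]
  rw [hsum, hpow]
  linear_combination hcancel

lemma div_mul_sub_eq_one_div_add {K : Type*} [Field K] {c A x : K} (hc : c ≠ 0) (hA : A ≠ 0)
    (hAx : A - x ≠ 0) : c / (c * (A - x)) = 1 / A + x / (A * (A - x)) := by
  field_simp
  ring

theorem stmt13_general
    (θ : ℝ) (e : ℕ → ℕ)
    (hrem : ∀ j : ℕ, 2 ≤ j →
      0 ≤ θ - ∑ k ∈ Finset.Icc 2 j, (e k : ℝ) * 2 ^ ((1 : ℤ) - (k : ℤ)) ∧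
      θ - ∑ k ∈ Finset.Icc 2 j, (e k : ℝ) * 2 ^ ((1 : ℤ) - (k : ℤ)) < 2 ^ ((1 : ℤ) - (j : ℤ)))
    (r : ℕ → ℕ)
    (hri : ∀ i : ℕ, 1 ≤ i → r i = 2 ^ i - 1 + ∑ k ∈ Finset.Icc 2 i, e k * 2 ^ (i - k)) :
    ∀ i : ℕ, 2 ≤ i →
      (2 : ℝ) ^ ((i : ℤ) - 1) / (r i : ℝ) =
        1 / (2 + θ) +
          ((θ - ∑ k ∈ Finset.Icc 2 i, (e k : ℝ) * 2 ^ ((1 : ℤ) - (k : ℤ))) + 2 ^ ((1 : ℤ) - (i : ℤ)))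
            / ((2 + θ) * (2 + θ - (θ - ∑ k ∈ Finset.Icc 2 i, (e k : ℝ) * 2 ^ ((1 : ℤ) - (k : ℤ)))
                - 2 ^ ((1 : ℤ) - (i : ℤ)))) ∧
      0 < ((θ - ∑ k ∈ Finset.Icc 2 i, (e k : ℝ) * 2 ^ ((1 : ℤ) - (k : ℤ))) + 2 ^ ((1 : ℤ) - (i : ℤ)))
            / ((2 + θ) * (2 + θ - (θ - ∑ k ∈ Finset.Icc 2 i, (e k : ℝ) * 2 ^ ((1 : ℤ) - (k : ℤ)))
                - 2 ^ ((1 : ℤ) - (i : ℤ)))) := by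
  intro i hi
  set S : ℝ := ∑ k ∈ Finset.Icc 2 i, (e k : ℝ) * 2 ^ ((1 : ℤ) - (k : ℤ))
  set δ : ℝ := 2 ^ ((1 : ℤ) - (i : ℤ))
  have hR : 0 ≤ θ - S := (hrem i hi).1
  have hS : 0 ≤ S := Finset.sum_nonneg fun k _ => by positivity
  have hδ : 0 < δ := by positivity
  have hδ_le : δ ≤ 1 := zpow_le_one_of_nonpos₀ one_le_two (by omega)
  have hA : 0 < 2 + θ := by linarith
  have hAx : 0 < 2 + θ - (θ - S + δ) := by linarith
  have hr : (r i : ℝ) = 2 ^ ((i : ℤ) - 1) * (2 + θ - (θ - S + δ)) := by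
    rw [hri i (by omega), cast_two_pow_sub_one_add_sum]
    ring
  rw [hr, sub_sub]
  exact ⟨div_mul_sub_eq_one_div_add (by positivity) hA.ne' hAx.ne',
    div_pos (by linarith) (mul_pos hA hAx)⟩

theorem stmt13
    (θ : ℝ) (hθ : 0 ≤ θ) (e : ℕ → ℕ)
    -- the digits e_j are the greedy binary expansion digits of θ
    (he2 : e 2 = ⌊2 * θ⌋₊)
    (hej : ∀ j : ℕ, 3 ≤ j → e j ≤ 1)
    (hrem : ∀ j : ℕ, 2 ≤ j →
      0 ≤ θ - ∑ k ∈ Finset.Icc 2 j, (e k : ℝ) * 2 ^ ((1 : ℤ) - (k : ℤ)) ∧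
      θ - ∑ k ∈ Finset.Icc 2 j, (e k : ℝ) * 2 ^ ((1 : ℤ) - (k : ℤ)) < 2 ^ ((1 : ℤ) - (j : ℤ)))
    (r : ℕ → ℕ)
    (hri : ∀ i : ℕ, 1 ≤ i → r i = 2 ^ i - 1 + ∑ k ∈ Finset.Icc 2 i, e k * 2 ^ (i - k)) :
    ∀ i : ℕ, 2 ≤ i →
      (2 : ℝ) ^ ((i : ℤ) - 1) / (r i : ℝ) =
        1 / (2 + θ) +
          ((θ - ∑ k ∈ Finset.Icc 2 i, (e k : ℝ) * 2 ^ ((1 : ℤ) - (k : ℤ))) + 2 ^ ((1 : ℤ) - (i : ℤ)))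
            / ((2 + θ) * (2 + θ - (θ - ∑ k ∈ Finset.Icc 2 i, (e k : ℝ) * 2 ^ ((1 : ℤ) - (k : ℤ)))
                - 2 ^ ((1 : ℤ) - (i : ℤ)))) ∧
      0 < ((θ - ∑ k ∈ Finset.Icc 2 i, (e k : ℝ) * 2 ^ ((1 : ℤ) - (k : ℤ))) + 2 ^ ((1 : ℤ) - (i : ℤ)))
            / ((2 + θ) * (2 + θ - (θ - ∑ k ∈ Finset.Icc 2 i, (e k : ℝ) * 2 ^ ((1 : ℤ) - (k : ℤ)))
                - 2 ^ ((1 : ℤ) - (i : ℤ)))) :=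
  stmt13_general θ e hrem r hri
end

section
/- Let θ ∈ ℝ_{≥0}, with greedy binary digits e_j, sequence r_0 = r_1 = 1, r_{i+1} = 2r_i + 1 + e_{i+1}, and representation count α(n) as before. Then lim_{n→∞} α(n)/n = 1/(2+θ). -/
/-!
A representation is determined by its set of indices `k ≥ 1` with `n_k = 1` (then `n_0` is `n`
minus their weight), so `α n` counts the finite sets `S` with `∑_{i ∈ S} r (i + 1) ≤ n`.
The closed form `r (i + 1) = 2 ^ (i + 1) - 1 + 2 ^ i T_{i+1}`, with `T_j` the partial sums of
the binary expansion of `θ`, gives `(2 + θ) 2 ^ i - (2 + θ) ≤ r (i + 1) ≤ (2 + θ) 2 ^ i`.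
Hence the weight of `S` lies within `(2 + θ) |S|` of `(2 + θ) ∑_{i ∈ S} 2 ^ i`, and as
`|S| = O(log n)`, comparing `S` with the binary number `∑_{i ∈ S} 2 ^ i` gives
`α n = n / (2 + θ) + O(log n)`.
-/

open Finset Filter Real Topology

def subsetsOfWeightLE (f : ℕ → ℕ) (n : ℕ) : Set (Finset ℕ) := {S | ∑ i ∈ S, f i ≤ n}

section BinaryComparison

variable {f : ℕ → ℕ} {c K : ℝ}

lemma sum_le_mul_sum_two_pow (hf : ∀ i, (f i : ℝ) ≤ c * 2 ^ i) (S : Finset ℕ) :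
    ((∑ i ∈ S, f i : ℕ) : ℝ) ≤ c * ((∑ i ∈ S, 2 ^ i : ℕ) : ℝ) := by
  push_cast
  rw [mul_sum]
  exact sum_le_sum fun i _ => hf i

lemma mul_sum_two_pow_le_sum_add (hK : ∀ i, c * 2 ^ i ≤ f i + K) (S : Finset ℕ) :
    c * ((∑ i ∈ S, 2 ^ i : ℕ) : ℝ) ≤ ((∑ i ∈ S, f i : ℕ) : ℝ) + K * S.card := by
  push_cast
  simpa [mul_sum, sum_add_distrib, mul_comm] using sum_le_sum fun i (_ : i ∈ S) => hK i

lemma two_pow_le_of_mem_subsetsOfWeightLE (hc : 0 < c) (hK : ∀ i, c * 2 ^ i ≤ f i + K) {n : ℕ}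
    {S : Finset ℕ} (hS : S ∈ subsetsOfWeightLE f n) {i : ℕ} (hi : i ∈ S) :
    (2 : ℝ) ^ i ≤ (n + K) / c := by
  have hfi : (f i : ℝ) ≤ n := by
    exact_mod_cast (single_le_sum (fun _ _ => Nat.zero_le _) hi).trans hS
  rw [le_div_iff₀ hc, mul_comm]
  linarith [hK i]

lemma subset_range_of_mem_subsetsOfWeightLE (hc : 0 < c) (hK : ∀ i, c * 2 ^ i ≤ f i + K) {n : ℕ}
    {S : Finset ℕ} (hS : S ∈ subsetsOfWeightLE f n) :
    S ⊆ range (⌊logb 2 ((n + K) / c)⌋₊ + 1) := by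
  intro i hi
  have h := two_pow_le_of_mem_subsetsOfWeightLE hc hK hS hi
  rw [mem_range, Nat.lt_succ_iff]
  apply Nat.le_floor
  rwa [le_logb_iff_rpow_le one_lt_two ((by positivity : (0 : ℝ) < 2 ^ i).trans_le h), rpow_natCast]

lemma finite_subsetsOfWeightLE (hc : 0 < c) (hK : ∀ i, c * 2 ^ i ≤ f i + K) (n : ℕ) :
    (subsetsOfWeightLE f n).Finite :=
  (Set.finite_Iic _).subset fun _ hS => subset_range_of_mem_subsetsOfWeightLE hc hK hS

lemma div_le_ncard_subsetsOfWeightLE (hc : 0 < c) (hf : ∀ i, (f i : ℝ) ≤ c * 2 ^ i)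
    (hK : ∀ i, c * 2 ^ i ≤ f i + K) (n : ℕ) :
    (n : ℝ) / c ≤ (subsetsOfWeightLE f n).ncard := by
  set M := ⌊(n : ℝ) / c⌋₊
  have hmaps : ∀ m ∈ (range (M + 1) : Set ℕ), equivBitIndices m ∈ subsetsOfWeightLE f n := by
    intro m hm
    have hm : (m : ℝ) ≤ n / c :=
      (Nat.le_floor_iff (by positivity)).mp (Nat.lt_succ_iff.mp (mem_range.mp hm))
    have hcm : c * m ≤ n := by rwa [le_div_iff₀ hc, mul_comm] at hm
    have hw := sum_le_mul_sum_two_pow hf m.bitIndices.toFinset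
    rw [sum_toFinset_bitIndices_two_pow] at hw
    show ∑ i ∈ m.bitIndices.toFinset, f i ≤ n
    exact_mod_cast hw.trans hcm
  have hcard := Set.ncard_le_ncard_of_injOn _ hmaps equivBitIndices.injective.injOn
    (finite_subsetsOfWeightLE hc hK n)
  rw [Set.ncard_coe_finset, card_range] at hcard
  calc (n : ℝ) / c ≤ M + 1 := (Nat.lt_floor_add_one _).le
    _ ≤ _ := by exact_mod_cast hcard

lemma mul_ncard_subsetsOfWeightLE_le (hc : 0 < c) (hK : ∀ i, c * 2 ^ i ≤ f i + K) (hK0 : 0 ≤ K)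
    {n : ℕ} (hn : c ≤ n + K) :
    c * (subsetsOfWeightLE f n).ncard ≤ n + K * (logb 2 ((n + K) / c) + 1) + c := by
  set L := logb 2 ((n + K) / c)
  have hL : 0 ≤ L := logb_nonneg one_lt_two (by rwa [le_div_iff₀ hc, one_mul])
  set B := (n + K * (L + 1)) / c
  have hmaps : ∀ S ∈ subsetsOfWeightLE f n, ∑ i ∈ S, 2 ^ i ∈ (range (⌊B⌋₊ + 1) : Set ℕ) := by
    intro S hS
    have hcard : (S.card : ℝ) ≤ L + 1 := by
      have h := card_le_card (subset_range_of_mem_subsetsOfWeightLE hc hK hS)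
      rw [card_range] at h
      calc (S.card : ℝ) ≤ ⌊L⌋₊ + 1 := by exact_mod_cast h
        _ ≤ L + 1 := by gcongr; exact Nat.floor_le hL
    have hw : ((∑ i ∈ S, f i : ℕ) : ℝ) ≤ n := by exact_mod_cast hS
    have hbin := mul_sum_two_pow_le_sum_add hK S
    rw [coe_range, Set.mem_Iio, Nat.lt_succ_iff]
    apply Nat.le_floor
    rw [le_div_iff₀ hc, mul_comm]
    nlinarith
  have hcard := Set.ncard_le_ncard_of_injOn _ hmaps (geomSum_injective le_rfl).injOn
  rw [Set.ncard_coe_finset, card_range] at hcard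
  have hB : (⌊B⌋₊ : ℝ) ≤ B := Nat.floor_le (by positivity)
  calc c * (subsetsOfWeightLE f n).ncard ≤ c * (⌊B⌋₊ + 1) := by gcongr; exact_mod_cast hcard
    _ ≤ c * (B + 1) := by gcongr
    _ = n + K * (L + 1) + c := by rw [mul_add, mul_div_cancel₀ _ hc.ne', mul_one]

lemma tendsto_logb_add_div_div_natCast (hc : 0 < c) (K : ℝ) :
    Tendsto (fun n : ℕ => logb 2 ((n + K) / c) / n) atTop (𝓝 0) := by
  have hx : Tendsto (fun n : ℕ => ((n : ℝ) + K) / c) atTop atTop :=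
    (tendsto_atTop_add_const_right _ K tendsto_natCast_atTop_atTop).atTop_div_const hc
  have hlog := (isLittleO_logb_id_atTop (b := 2)).tendsto_div_nhds_zero.comp hx
  have hratio : Tendsto (fun n : ℕ => ((n : ℝ) + K) / c / n) atTop (𝓝 (1 / c)) := by
    have h := (tendsto_const_nhds (x := (1 : ℝ))).add (tendsto_const_div_atTop_nhds_zero_nat K)
    rw [add_zero] at h
    refine (h.div_const c).congr' ?_
    filter_upwards [eventually_gt_atTop 0] with n hn
    field_simp
  have h := hlog.mul hratio
  rw [zero_mul] at h
  refine h.congr' ?_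
  filter_upwards [hx.eventually_gt_atTop 0] with n hn
  have hnK : (n : ℝ) + K ≠ 0 := ((div_pos_iff_of_pos_right hc).mp hn).ne'
  simp only [Function.comp_apply, id]
  field_simp

theorem tendsto_ncard_subsetsOfWeightLE_div (hc : 0 < c)
    (hf : ∀ i, (f i : ℝ) ≤ c * 2 ^ i) (hK : ∀ i, c * 2 ^ i ≤ f i + K) :
    Tendsto (fun n : ℕ => ((subsetsOfWeightLE f n).ncard : ℝ) / n) atTop (𝓝 (1 / c)) := by
  have hK0 : 0 ≤ K := by linarith [hf 0, hK 0]
  have hupper : Tendsto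
      (fun n : ℕ => 1 / c + K / c * (logb 2 ((n + K) / c) / n) + (K / c + 1) / n)
      atTop (𝓝 (1 / c)) := by
    simpa using (tendsto_const_nhds.add
      ((tendsto_logb_add_div_div_natCast hc K).const_mul (K / c))).add
        (tendsto_const_div_atTop_nhds_zero_nat (K / c + 1))
  refine tendsto_of_tendsto_of_tendsto_of_le_of_le' tendsto_const_nhds hupper ?_ ?_
  · filter_upwards [eventually_gt_atTop 0] with n hn
    rw [le_div_iff₀ (by positivity), one_div_mul_eq_div]
    exact div_le_ncard_subsetsOfWeightLE hc hf hK n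
  · filter_upwards [eventually_gt_atTop 0, eventually_ge_atTop ⌈c⌉₊] with n hn hnc
    have hcn : c ≤ n + K := by linarith [Nat.ceil_le.mp hnc]
    have h := mul_ncard_subsetsOfWeightLE_le hc hK hK0 hcn
    rw [div_le_iff₀ (by positivity)]
    field_simp
    linarith

end BinaryComparison

noncomputable def succSupport (g : ℕ →₀ ℕ) : Finset ℕ :=
  (g.support.erase 0).preimage Nat.succ Nat.succ_injective.injOn

lemma mem_succSupport {g : ℕ →₀ ℕ} {i : ℕ} : i ∈ succSupport g ↔ g (i + 1) ≠ 0 := by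
  simp [succSupport]

lemma sum_support_erase_zero_eq (r : ℕ → ℕ) {g : ℕ →₀ ℕ} (hg : ∀ k, 1 ≤ k → g k ≤ 1) :
    ∑ k ∈ g.support.erase 0, g k * r k = ∑ i ∈ succSupport g, r (i + 1) := by
  rw [succSupport, ← sum_preimage Nat.succ _ Nat.succ_injective.injOn (fun k => g k * r k)]
  · refine sum_congr rfl fun i hi => ?_
    have hgi : g (i + 1) = 1 := by
      have := hg (i + 1) (by omega)
      have := mem_succSupport.mp hi
      omega
    simp [hgi]
  · intro k hk hkr
    obtain ⟨hk0, -⟩ := mem_erase.mp hk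
    exact absurd ⟨k - 1, Nat.succ_pred_eq_of_ne_zero hk0⟩ hkr

noncomputable def finsuppOfFinset (a : ℕ) (S : Finset ℕ) : ℕ →₀ ℕ :=
  Finsupp.single 0 a + ∑ i ∈ S, Finsupp.single (i + 1) 1

lemma finsuppOfFinset_zero (a : ℕ) (S : Finset ℕ) : finsuppOfFinset a S 0 = a := by
  simp [finsuppOfFinset]

lemma finsuppOfFinset_succ (a : ℕ) (S : Finset ℕ) (i : ℕ) :
    finsuppOfFinset a S (i + 1) = if i ∈ S then 1 else 0 := by
  simp [finsuppOfFinset, Finsupp.single_apply]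

lemma succSupport_finsuppOfFinset (a : ℕ) (S : Finset ℕ) :
    succSupport (finsuppOfFinset a S) = S := by
  ext i
  simp [mem_succSupport, finsuppOfFinset_succ]

noncomputable def equivSubsetsOfWeightLE (r : ℕ → ℕ) (n : ℕ) :
    {g : ℕ →₀ ℕ // (∀ k : ℕ, 1 ≤ k → g k ≤ 1) ∧ g 0 + ∑ k ∈ g.support.erase 0, g k * r k = n} ≃
      subsetsOfWeightLE (fun i => r (i + 1)) n where
  toFun g := ⟨succSupport g.1, by
    obtain ⟨g, hg, hgn⟩ := g
    change ∑ i ∈ succSupport g, r (i + 1) ≤ n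
    rw [← sum_support_erase_zero_eq r hg]
    omega⟩
  invFun S := ⟨finsuppOfFinset (n - ∑ i ∈ S.1, r (i + 1)) S, by
    have hg : ∀ k, 1 ≤ k → finsuppOfFinset (n - ∑ i ∈ S.1, r (i + 1)) S k ≤ 1 := by
      intro k hk
      obtain ⟨i, rfl⟩ := Nat.exists_eq_add_of_le' hk
      rw [finsuppOfFinset_succ]
      split_ifs <;> omega
    refine ⟨hg, ?_⟩
    have hS : ∑ i ∈ S.1, r (i + 1) ≤ n := S.2
    rw [sum_support_erase_zero_eq r hg, succSupport_finsuppOfFinset, finsuppOfFinset_zero]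
    omega⟩
  left_inv g := by
    obtain ⟨g, hg, hgn⟩ := g
    ext (_ | i)
    · change finsuppOfFinset _ _ 0 = g 0
      rw [finsuppOfFinset_zero, ← sum_support_erase_zero_eq r hg]
      omega
    · change finsuppOfFinset _ (succSupport g) (i + 1) = g (i + 1)
      have := hg (i + 1) (by omega)
      simp only [finsuppOfFinset_succ, mem_succSupport]
      split_ifs <;> omega
  right_inv S := Subtype.ext (succSupport_finsuppOfFinset _ _)

lemma natCard_repr_eq_ncard (r : ℕ → ℕ) (n : ℕ) :
    Nat.card {g : ℕ →₀ ℕ //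
      (∀ k : ℕ, 1 ≤ k → g k ≤ 1) ∧ g 0 + ∑ k ∈ g.support.erase 0, g k * r k = n} =
      (subsetsOfWeightLE (fun i => r (i + 1)) n).ncard := by
  rw [← Nat.card_coe_set_eq]
  exact Nat.card_congr (equivSubsetsOfWeightLE r n)

lemma two_zpow_one_sub_succ (i : ℕ) :
    (2 : ℝ) ^ ((1 : ℤ) - ((i + 1 : ℕ) : ℤ)) = ((2 : ℝ) ^ i)⁻¹ := by
  rw [← zpow_natCast, ← zpow_neg]
  congr 1
  omega

noncomputable def digitPartialSum (e : ℕ → ℕ) (j : ℕ) : ℝ :=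
  ∑ k ∈ Icc 2 j, (e k : ℝ) * 2 ^ ((1 : ℤ) - k)

section GreedyDigits

variable {θ : ℝ} {e r : ℕ → ℕ}

lemma cast_r_succ_eq (hr1 : r 1 = 1) (hrec : ∀ i, 1 ≤ i → r (i + 1) = 2 * r i + 1 + e (i + 1))
    (i : ℕ) : (r (i + 1) : ℝ) = 2 ^ (i + 1) - 1 + 2 ^ i * digitPartialSum e (i + 1) := by
  induction i with
  | zero => norm_num [hr1, digitPartialSum]
  | succ i ih =>
    rw [hrec (i + 1) (by omega), digitPartialSum, ← insert_Icc_right_eq_Icc_add_one (by omega),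
      sum_insert (by simp), two_zpow_one_sub_succ]
    push_cast
    rw [ih, digitPartialSum]
    field_simp
    ring

lemma r_succ_le (hθ : 0 ≤ θ) (hr1 : r 1 = 1)
    (hrec : ∀ i, 1 ≤ i → r (i + 1) = 2 * r i + 1 + e (i + 1))
    (hsum : ∀ j, 2 ≤ j → digitPartialSum e j ≤ θ) (i : ℕ) :
    (r (i + 1) : ℝ) ≤ (2 + θ) * 2 ^ i := by
  have hT : digitPartialSum e (i + 1) ≤ θ := by
    rcases Nat.eq_zero_or_pos i with rfl | hi
    · simpa [digitPartialSum] using hθ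
    · exact hsum (i + 1) (by omega)
  rw [cast_r_succ_eq hr1 hrec, pow_succ]
  nlinarith [pow_pos (two_pos : (0 : ℝ) < 2) i]

lemma le_r_succ_add (hθ : 0 ≤ θ) (hr1 : r 1 = 1)
    (hrec : ∀ i, 1 ≤ i → r (i + 1) = 2 * r i + 1 + e (i + 1))
    (hrem : ∀ j, 2 ≤ j → θ - digitPartialSum e j < 2 ^ ((1 : ℤ) - j)) (i : ℕ) :
    (2 + θ) * 2 ^ i ≤ r (i + 1) + (2 + θ) := by
  rcases Nat.eq_zero_or_pos i with rfl | hi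
  · simp [hr1]
  have h := hrem (i + 1) (by omega)
  rw [two_zpow_one_sub_succ] at h
  have h' : 2 ^ i * (θ - digitPartialSum e (i + 1)) < 1 :=
    calc 2 ^ i * (θ - digitPartialSum e (i + 1)) < 2 ^ i * ((2 : ℝ) ^ i)⁻¹ := by gcongr
      _ = 1 := mul_inv_cancel₀ (by positivity)
  rw [cast_r_succ_eq hr1 hrec, pow_succ]
  nlinarith

end GreedyDigits

theorem stmt17_general
    (θ : ℝ) (hθ : 0 ≤ θ) (e : ℕ → ℕ)
    -- the digits e_j are the greedy binary expansion digits of θ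
    (hrem : ∀ j : ℕ, 2 ≤ j →
      0 ≤ θ - ∑ k ∈ Finset.Icc 2 j, (e k : ℝ) * 2 ^ ((1 : ℤ) - (k : ℤ)) ∧
      θ - ∑ k ∈ Finset.Icc 2 j, (e k : ℝ) * 2 ^ ((1 : ℤ) - (k : ℤ)) < 2 ^ ((1 : ℤ) - (j : ℤ)))
    (r : ℕ → ℕ) (hr1 : r 1 = 1)
    (hrec : ∀ i : ℕ, 1 ≤ i → r (i + 1) = 2 * r i + 1 + e (i + 1))
    -- α n counts the representations n = n_0 + Σ_{k≥1} n_k r_k with n_0 ∈ ℕ and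
    -- n_k ∈ {0,1} for k ≥ 1 (finitely many nonzero)
    (α : ℕ → ℕ)
    (hα : ∀ n : ℕ, α n = Nat.card {g : ℕ →₀ ℕ //
      (∀ k : ℕ, 1 ≤ k → g k ≤ 1) ∧ g 0 + ∑ k ∈ g.support.erase 0, g k * r k = n})
    :
    Filter.Tendsto (fun n : ℕ => (α n : ℝ) / (n : ℝ)) Filter.atTop (nhds (1 / (2 + θ))) := by
  have hc : 0 < 2 + θ := by linarith
  have h := tendsto_ncard_subsetsOfWeightLE_div hc
    (r_succ_le hθ hr1 hrec fun j hj => sub_nonneg.mp (hrem j hj).1)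
    (le_r_succ_add hθ hr1 hrec fun j hj => (hrem j hj).2)
  simpa only [hα, natCard_repr_eq_ncard] using h

theorem stmt17
    (θ : ℝ) (hθ : 0 ≤ θ) (e : ℕ → ℕ)
    -- the digits e_j are the greedy binary expansion digits of θ
    (he2 : e 2 = ⌊2 * θ⌋₊)
    (hej : ∀ j : ℕ, 3 ≤ j → e j ≤ 1)
    (hrem : ∀ j : ℕ, 2 ≤ j →
      0 ≤ θ - ∑ k ∈ Finset.Icc 2 j, (e k : ℝ) * 2 ^ ((1 : ℤ) - (k : ℤ)) ∧
      θ - ∑ k ∈ Finset.Icc 2 j, (e k : ℝ) * 2 ^ ((1 : ℤ) - (k : ℤ)) < 2 ^ ((1 : ℤ) - (j : ℤ)))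
    (r : ℕ → ℕ) (hr0 : r 0 = 1) (hr1 : r 1 = 1)
    (hrec : ∀ i : ℕ, 1 ≤ i → r (i + 1) = 2 * r i + 1 + e (i + 1))
    -- α n counts the representations n = n_0 + Σ_{k≥1} n_k r_k with n_0 ∈ ℕ and
    -- n_k ∈ {0,1} for k ≥ 1 (finitely many nonzero)
    (α : ℕ → ℕ)
    (hα : ∀ n : ℕ, α n = Nat.card {g : ℕ →₀ ℕ //
      (∀ k : ℕ, 1 ≤ k → g k ≤ 1) ∧ g 0 + ∑ k ∈ g.support.erase 0, g k * r k = n})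
    :
    Filter.Tendsto (fun n : ℕ => (α n : ℝ) / (n : ℝ)) Filter.atTop (nhds (1 / (2 + θ))) :=
  stmt17_general θ hθ e hrem r hr1 hrec α hα
end

section
/- Let r_0 = r_1 = 1 and r_{i+1} = 2r_i + 1 + 2^i for i ≥ 1, and let α(n) count representations n = n_0 + Σ_{k≥1} n_k r_k with n_0 ∈ ℕ and n_k ∈ {0,1}. Then lim_{n→∞} α(n)/n = 0, while α(n) ≥ 1 for all n ≥ 0. -/
/-!
A representation is determined by the set `S` of indices `k ≥ 1` with `n_k = 1`, since then
`n_0 = n - ∑_{k ∈ S} r_k`; and every `k ∈ S` has `r_k ≤ n`. Solving the recurrence gives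
`r_{j+1} + 1 = (j + 2) 2^j`, so if `m` is the largest `j` with `(j + 2) 2^j ≤ n + 1`, then
`S ⊆ {1, …, m + 1}` and `α(n) ≤ 2^(m+1) ≤ 2(n + 1)/(m + 2)`. As `m → ∞`, `α(n)/n → 0`.
-/

open Finset Filter Topology

def IsRepr (r : ℕ → ℕ) (n : ℕ) (g : ℕ →₀ ℕ) : Prop :=
  (∀ k, 1 ≤ k → g k ≤ 1) ∧ g 0 + ∑ k ∈ g.support.erase 0, g k * r k = n

namespace IsRepr

variable {r : ℕ → ℕ} {n : ℕ} {g : ℕ →₀ ℕ}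

theorem single_zero (r : ℕ → ℕ) (n : ℕ) : IsRepr r n (Finsupp.single 0 n) := by
  refine ⟨fun k hk => by simp [show 0 ≠ k by omega], ?_⟩
  have : (Finsupp.single 0 n).support.erase 0 = ∅ := by
    ext k
    simp only [mem_erase, Finsupp.mem_support_iff, Finsupp.single_apply, notMem_empty,
      iff_false, not_and]
    intro hk
    simp [Ne.symm hk]
  simp [this]

theorem apply_eq_one (h : IsRepr r n g) {k : ℕ} (hk : k ∈ g.support.erase 0) : g k = 1 := by
  obtain ⟨hk0, hkg⟩ := mem_erase.mp hk
  have := h.1 k (Nat.one_le_iff_ne_zero.mpr hk0)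
  have := Finsupp.mem_support_iff.mp hkg
  omega

theorem add_sum_eq (h : IsRepr r n g) : g 0 + ∑ k ∈ g.support.erase 0, r k = n := by
  have : ∑ k ∈ g.support.erase 0, g k * r k = ∑ k ∈ g.support.erase 0, r k :=
    sum_congr rfl fun k hk => by rw [h.apply_eq_one hk, one_mul]
  rw [← this, h.2]

theorem le_of_mem (h : IsRepr r n g) {k : ℕ} (hk : k ∈ g.support.erase 0) : r k ≤ n :=
  h.add_sum_eq ▸ (single_le_sum (fun _ _ => Nat.zero_le _) hk).trans (Nat.le_add_left _ _)

theorem eq_of_support_erase_eq {g' : ℕ →₀ ℕ} (h : IsRepr r n g) (h' : IsRepr r n g')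
    (hS : g.support.erase 0 = g'.support.erase 0) : g = g' := by
  have h0 : g 0 = g' 0 := by
    have := h.add_sum_eq
    have := h'.add_sum_eq
    rw [hS] at *
    omega
  ext k
  rcases Nat.eq_zero_or_pos k with rfl | hk
  · exact h0
  by_cases hmem : k ∈ g.support.erase 0
  · rw [h.apply_eq_one hmem, h'.apply_eq_one (hS ▸ hmem)]
  · have hmem' : k ∉ g'.support.erase 0 := hS ▸ hmem
    simp only [mem_erase, Finsupp.mem_support_iff, not_and, not_not] at hmem hmem'
    rw [hmem (by omega), hmem' (by omega)]

end IsRepr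

section Counting

variable {r : ℕ → ℕ} {n N : ℕ}

def reprSupport (hN : ∀ k, 1 ≤ k → r k ≤ n → k ≤ N) :
    {g // IsRepr r n g} → (Icc 1 N).powerset := fun g =>
  ⟨g.1.support.erase 0, mem_powerset.mpr fun k hk =>
    mem_Icc.mpr ⟨Nat.one_le_iff_ne_zero.mpr (ne_of_mem_erase hk),
      hN k (Nat.one_le_iff_ne_zero.mpr (ne_of_mem_erase hk)) (g.2.le_of_mem hk)⟩⟩

theorem reprSupport_injective (hN : ∀ k, 1 ≤ k → r k ≤ n → k ≤ N) :
    Function.Injective (reprSupport hN) := fun g g' h =>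
  Subtype.ext (g.2.eq_of_support_erase_eq g'.2 (congrArg Subtype.val h))

theorem one_le_card_isRepr (hN : ∀ k, 1 ≤ k → r k ≤ n → k ≤ N) :
    1 ≤ Nat.card {g // IsRepr r n g} :=
  have := Finite.of_injective _ (reprSupport_injective hN)
  have : Nonempty {g // IsRepr r n g} := ⟨⟨_, IsRepr.single_zero r n⟩⟩
  Nat.card_pos

theorem card_isRepr_le (hN : ∀ k, 1 ≤ k → r k ≤ n → k ≤ N) :
    Nat.card {g // IsRepr r n g} ≤ 2 ^ N := by
  calc Nat.card {g // IsRepr r n g} ≤ Nat.card (Icc 1 N).powerset :=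
        Nat.card_le_card_of_injective _ (reprSupport_injective hN)
    _ = 2 ^ N := by
      rw [Nat.card_eq_fintype_card, Fintype.card_coe, card_powerset, Nat.card_Icc,
        Nat.add_sub_cancel]

end Counting

theorem add_one_eq_mul_two_pow {r : ℕ → ℕ} (hr1 : r 1 = 1)
    (hrec : ∀ i, 1 ≤ i → r (i + 1) = 2 * r i + 1 + 2 ^ i) (j : ℕ) :
    r (j + 1) + 1 = (j + 2) * 2 ^ j := by
  induction j with
  | zero => simp [hr1]
  | succ i ih =>
    rw [hrec (i + 1) (by omega), pow_succ]
    nlinarith [ih]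

def maxLevel (n : ℕ) : ℕ := Nat.findGreatest (fun j => (j + 2) * 2 ^ j ≤ n + 1) n

theorem maxLevel_spec {n : ℕ} (hn : 1 ≤ n) : (maxLevel n + 2) * 2 ^ maxLevel n ≤ n + 1 :=
  Nat.findGreatest_spec (P := fun j => (j + 2) * 2 ^ j ≤ n + 1) (Nat.zero_le n) (by omega)

theorem le_maxLevel {n j : ℕ} (hj : (j + 2) * 2 ^ j ≤ n + 1) : j ≤ maxLevel n := by
  have : 1 ≤ 2 ^ j := Nat.one_le_two_pow
  exact Nat.le_findGreatest (by nlinarith) hj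

theorem tendsto_maxLevel : Tendsto maxLevel atTop atTop :=
  tendsto_atTop.mpr fun b =>
    (eventually_ge_atTop ((b + 2) * 2 ^ b)).mono fun _ hn => le_maxLevel (by omega)

theorem tendsto_div_zero_of_mul_le {f M : ℕ → ℕ} {C : ℕ} (hM : Tendsto M atTop atTop)
    (h : ∀ᶠ n in atTop, f n * M n ≤ C * n) :
    Tendsto (fun n => (f n : ℝ) / n) atTop (𝓝 0) := by
  have hM' : Tendsto (fun n => (M n : ℝ)) atTop atTop := tendsto_natCast_atTop_atTop.comp hM
  refine squeeze_zero' (.of_forall fun n => by positivity) ?_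
    (tendsto_const_nhds (x := (C : ℝ)).div_atTop hM')
  filter_upwards [h, eventually_gt_atTop 0, hM.eventually_gt_atTop 0] with n hn hn0 hM0
  rw [div_le_div_iff₀ (by exact_mod_cast hn0) (by exact_mod_cast hM0)]
  exact_mod_cast hn

theorem stmt18_general (r : ℕ → ℕ) (hr1 : r 1 = 1)
    (hrec : ∀ i : ℕ, 1 ≤ i → r (i + 1) = 2 * r i + 1 + 2 ^ i)
    (α : ℕ → ℕ)
    (hα : ∀ n : ℕ, α n = Nat.card {g : ℕ →₀ ℕ //
      (∀ k : ℕ, 1 ≤ k → g k ≤ 1) ∧ g 0 + ∑ k ∈ g.support.erase 0, g k * r k = n}) :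
    Filter.Tendsto (fun n : ℕ => (α n : ℝ) / (n : ℝ)) Filter.atTop (nhds 0) ∧
    ∀ n : ℕ, 1 ≤ α n := by
  have hN : ∀ n k, 1 ≤ k → r k ≤ n → k ≤ maxLevel n + 1 := fun n k hk hrk => by
    obtain ⟨j, rfl⟩ : ∃ j, k = j + 1 := ⟨k - 1, by omega⟩
    have := le_maxLevel (n := n) (j := j) (by rw [← add_one_eq_mul_two_pow hr1 hrec j]; omega)
    omega
  have hbound : ∀ n, 1 ≤ n → α n * (maxLevel n + 2) ≤ 4 * n := fun n hn =>
    calc α n * (maxLevel n + 2) ≤ 2 ^ (maxLevel n + 1) * (maxLevel n + 2) :=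
          Nat.mul_le_mul_right _ (hα n ▸ card_isRepr_le (hN n))
      _ = 2 * ((maxLevel n + 2) * 2 ^ maxLevel n) := by ring
      _ ≤ 4 * n := by linarith [maxLevel_spec hn]
  have hlevel : Tendsto (fun n => maxLevel n + 2) atTop atTop :=
    tendsto_atTop_mono (fun _ => Nat.le_add_right _ 2) tendsto_maxLevel
  exact ⟨tendsto_div_zero_of_mul_le hlevel ((eventually_ge_atTop 1).mono hbound),
    fun n => hα n ▸ one_le_card_isRepr (hN n)⟩

theorem stmt18 (r : ℕ → ℕ) (hr0 : r 0 = 1) (hr1 : r 1 = 1)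
    (hrec : ∀ i : ℕ, 1 ≤ i → r (i + 1) = 2 * r i + 1 + 2 ^ i)
    (α : ℕ → ℕ)
    (hα : ∀ n : ℕ, α n = Nat.card {g : ℕ →₀ ℕ //
      (∀ k : ℕ, 1 ≤ k → g k ≤ 1) ∧ g 0 + ∑ k ∈ g.support.erase 0, g k * r k = n}) :
    Filter.Tendsto (fun n : ℕ => (α n : ℝ) / (n : ℝ)) Filter.atTop (nhds 0) ∧
    ∀ n : ℕ, 1 ≤ α n :=
  stmt18_general r hr1 hrec α hα
end

section
/- Let {r_i} be the sequence r_0 = r_1 = 1, r_{i+1} = 2r_i + 1 + e_{i+1} arising from the greedy binary digits of some θ ∈ ℝ_{≥0} ∪ {∞} (with e_j = 2^{j−1} when θ = ∞), and let α(n) be the associated representation count. Then there is no quasi-polynomial Q (a function of the form Σ_{l=0}^d a_l(n) n^l with each a_l periodic) and bounded function b such that α(n) = Q(n) + b(n) for all sufficiently large n. Concretely: for any s ≥ 1, any M ≥ 0, and any functions Q, b with Q quasi-polynomial of period s and |b(n)| ≤ M for all n, there exists n with α(n) ≠ Q(n) + b(n). -/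
/-!
Only the digits `n_1, …, n_i` can be nonzero when `n < r_{i+1}`, and every choice of them is
admissible once `n ≥ r_1 + ⋯ + r_i`; so `α = 2^i` on the whole interval
`[r_1 + ⋯ + r_i, r_{i+1})`, whose length is at least `i`. On multiples of `s` a quasi-polynomial
of period `s` is a polynomial `P`, so if `α = Q + b`, then `P` stays within `M` of `2^i` on runs of
consecutive integers whose length grows with `i`. The differences `P (x + 1) - P x` are then
bounded at arbitrarily large `x`, which forces `P` to be affine; the long runs force its slope to
vanish; and a constant cannot stay near `2^i` for all large `i`.
-/

open Finset Filter Polynomial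

namespace Polynomial

theorem degree_le_zero_of_frequently_abs_le {q : ℝ[X]} {B : ℝ}
    (h : ∃ᶠ x in atTop, |q.eval x| ≤ B) : q.degree ≤ 0 := by
  by_contra! hdeg
  exact h ((abs_tendsto_atTop q hdeg).eventually_gt_atTop B |>.mono fun _ => not_le.2)

theorem exists_eval_add_natCast_eq_of_frequently {P : ℝ[X]} {B : ℝ}
    (h : ∃ᶠ x in atTop, |P.eval (x + 1) - P.eval x| ≤ B) :
    ∃ c : ℝ, ∀ (x : ℝ) (m : ℕ), P.eval (x + m) = P.eval x + m * c := by
  set q := P.comp (X + 1) - P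
  have hq : ∀ x, q.eval x = P.eval (x + 1) - P.eval x := by simp [q]
  have hq_const : q = C (q.coeff 0) :=
    eq_C_of_degree_le_zero (degree_le_zero_of_frequently_abs_le (by simpa only [hq] using h))
  refine ⟨q.coeff 0, fun x m => ?_⟩
  induction m with
  | zero => simp
  | succ m ih =>
    have hstep := hq (x + m)
    rw [hq_const, eval_C] at hstep
    push_cast
    rw [← add_assoc]
    linarith

theorem not_forall_exists_abs_eval_sub_two_pow_le (P : ℝ[X]) (M : ℝ) :
    ¬ ∀ L x₀ : ℕ, ∃ i k : ℕ, x₀ ≤ i ∧ x₀ ≤ k ∧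
      ∀ m ≤ L, |P.eval ((k + m : ℕ) : ℝ) - 2 ^ i| ≤ M := by
  intro h
  have near_run : ∀ L x₀ : ℕ, ∃ k : ℕ, x₀ ≤ k ∧ ∀ m ≤ L,
      |P.eval ((k + m : ℕ) : ℝ) - P.eval (k : ℝ)| ≤ 2 * M := by
    intro L x₀
    obtain ⟨i, k, -, hk, hrun⟩ := h L x₀
    refine ⟨k, hk, fun m hm => ?_⟩
    have h0 := hrun 0 (Nat.zero_le L)
    rw [add_zero] at h0
    rw [abs_le] at h0 ⊢
    have := abs_le.1 (hrun m hm)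
    constructor <;> linarith
  obtain ⟨c, hc⟩ : ∃ c : ℝ, ∀ (x : ℝ) (m : ℕ), P.eval (x + m) = P.eval x + m * c := by
    refine exists_eval_add_natCast_eq_of_frequently (B := 2 * M) (frequently_atTop.2 fun x => ?_)
    obtain ⟨k, hk, hrun⟩ := near_run 1 ⌈x⌉₊
    refine ⟨k, (Nat.le_ceil x).trans (by exact_mod_cast hk), ?_⟩
    simpa using hrun 1 le_rfl
  have hc0 : c = 0 := by
    by_contra hc0
    obtain ⟨L, hL⟩ := exists_nat_gt (2 * M / |c|)
    obtain ⟨k, -, hrun⟩ := near_run L 0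
    have := hrun L le_rfl
    rw [Nat.cast_add, hc, add_sub_cancel_left, abs_mul, Nat.abs_cast] at this
    rw [div_lt_iff₀ (abs_pos.2 hc0)] at hL
    linarith
  obtain ⟨i, k, hi, -, hrun⟩ := h 0 ⌈P.eval 0 + M⌉₊
  have hk := hrun 0 le_rfl
  rw [add_zero, ← zero_add (k : ℝ), hc, hc0, mul_zero, add_zero] at hk
  have : P.eval 0 + M < 2 ^ i := calc
    _ ≤ (⌈P.eval 0 + M⌉₊ : ℝ) := Nat.le_ceil _
    _ ≤ i := by exact_mod_cast hi
    _ < 2 ^ i := by exact_mod_cast Nat.lt_two_pow_self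
  linarith [le_abs_self (P.eval 0 - 2 ^ i), neg_abs_le (P.eval 0 - 2 ^ i)]

end Polynomial

def DigitRep (r : ℕ → ℕ) (n : ℕ) : Type :=
  {g : ℕ →₀ ℕ // (∀ k : ℕ, 1 ≤ k → g k ≤ 1) ∧ g 0 + ∑ k ∈ g.support.erase 0, g k * r k = n}

namespace DigitRep

noncomputable def ofFinset (r : ℕ → ℕ) (n : ℕ) (T : Finset ℕ) : ℕ →₀ ℕ :=
  Finsupp.single 0 (n - ∑ k ∈ T, r k) + T.val.toFinsupp

variable {r : ℕ → ℕ} {n i : ℕ}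

theorem ofFinset_apply {T : Finset ℕ} (hT : 0 ∉ T) (k : ℕ) :
    ofFinset r n T k = if k = 0 then n - ∑ j ∈ T, r j else if k ∈ T then 1 else 0 := by
  classical
  rcases eq_or_ne k 0 with rfl | hk
  · simp [ofFinset, Multiset.toFinsupp_apply, hT]
  · simp [ofFinset, Multiset.toFinsupp_apply, Multiset.count_eq_of_nodup T.nodup, hk]

theorem support_ofFinset_erase_zero {T : Finset ℕ} (hT : 0 ∉ T) :
    (ofFinset r n T).support.erase 0 = T := by
  ext k
  rcases eq_or_ne k 0 with rfl | hk
  · simp [hT]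
  · by_cases hkT : k ∈ T <;> simp [ofFinset_apply hT, hk, hkT]

theorem support_erase_zero_subset {g : ℕ →₀ ℕ}
    (hsum : g 0 + ∑ k ∈ g.support.erase 0, g k * r k = n) (hbig : ∀ k, i < k → n < r k) : g.support.erase 0 ⊆ Icc 1 i := by
  intro k hk
  obtain ⟨hk0, hkg⟩ := mem_erase.1 hk
  refine mem_Icc.2 ⟨Nat.one_le_iff_ne_zero.2 hk0, not_lt.1 fun hik => ?_⟩
  have : r k ≤ g k * r k := Nat.le_mul_of_pos_left _ (Nat.pos_of_ne_zero (by simpa using hkg))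
  have := single_le_sum (f := fun j => g j * r j) (fun _ _ => Nat.zero_le _) hk
  have := hbig k hik
  omega

theorem eq_ofFinset {g : ℕ →₀ ℕ} (hle : ∀ k : ℕ, 1 ≤ k → g k ≤ 1)
    (hsum : g 0 + ∑ k ∈ g.support.erase 0, g k * r k = n) :
    g = ofFinset r n (g.support.erase 0) := by
  have hone : ∀ k ∈ g.support.erase 0, g k = 1 := fun k hk => by
    obtain ⟨hk0, hkg⟩ := mem_erase.1 hk
    have := hle k (Nat.one_le_iff_ne_zero.2 hk0)
    have := Finsupp.mem_support_iff.1 hkg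
    omega
  have hdigits : ∑ k ∈ g.support.erase 0, g k * r k = ∑ k ∈ g.support.erase 0, r k :=
    sum_congr rfl fun k hk => by rw [hone k hk, one_mul]
  ext k
  rw [ofFinset_apply (notMem_erase 0 _)]
  split_ifs with hk0 hkT
  · subst hk0
    omega
  · exact hone k hkT
  · simpa [hk0] using hkT

theorem card_eq_two_pow (hsum : ∑ k ∈ Icc 1 i, r k ≤ n) (hbig : ∀ k, i < k → n < r k) :
    Nat.card (DigitRep r n) = 2 ^ i := by
  have h0 : ∀ {T : Finset ℕ}, T ∈ (Icc 1 i).powerset → 0 ∉ T := fun hT h0 => by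
    simpa using (mem_Icc.1 (mem_powerset.1 hT h0)).1
  let e : DigitRep r n ≃ (Icc 1 i).powerset :=
    { toFun g := ⟨g.1.support.erase 0, mem_powerset.2 (support_erase_zero_subset g.2.2 hbig)⟩
      invFun T := ⟨ofFinset r n T, fun k hk => ?_, ?_⟩
      left_inv g := Subtype.ext (eq_ofFinset g.2.1 g.2.2).symm
      right_inv T := Subtype.ext (support_ofFinset_erase_zero (h0 T.2)) }
  · rw [Nat.card_congr e, Nat.card_eq_fintype_card, Fintype.card_coe, card_powerset,
      Nat.card_Icc, Nat.add_sub_cancel]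
  · rw [ofFinset_apply (h0 T.2), if_neg (by omega)]
    split_ifs <;> omega
  · have hT := h0 T.2
    have hdigits : ∑ k ∈ T.1, ofFinset r n T k * r k = ∑ k ∈ T.1, r k :=
      sum_congr rfl fun k hk => by
        rw [ofFinset_apply hT, if_neg (ne_of_mem_of_not_mem hk hT), if_pos hk, one_mul]
    rw [support_ofFinset_erase_zero hT, ofFinset_apply hT, if_pos rfl, hdigits]
    exact Nat.sub_add_cancel ((sum_le_sum_of_subset (mem_powerset.1 T.2)).trans hsum)

end DigitRep

section Recurrence

variable {e r : ℕ → ℕ} (hrec : ∀ i, 1 ≤ i → r (i + 1) = 2 * r i + 1 + e (i + 1))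
include hrec

theorem monotoneOn_of_recurrence : MonotoneOn r (Set.Ici 1) :=
  monotoneOn_nat_Ici_of_le_succ fun i hi => by rw [hrec i hi]; omega

theorem sum_Icc_add_le_of_recurrence (i : ℕ) : ∑ k ∈ Icc 1 i, r k + i ≤ r (i + 1) := by
  induction i with
  | zero => simp
  | succ i ih =>
    rw [sum_Icc_succ_top (Nat.le_add_left 1 i), hrec (i + 1) (Nat.le_add_left 1 i)]
    omega

theorem card_digitRep_of_recurrence {i n : ℕ} (hlo : ∑ k ∈ Icc 1 i, r k ≤ n)
    (hhi : n < r (i + 1)) : Nat.card (DigitRep r n) = 2 ^ i :=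
  DigitRep.card_eq_two_pow hlo fun k hik => hhi.trans_le <|
    monotoneOn_of_recurrence hrec (Set.mem_Ici.2 (Nat.le_add_left 1 i))
      (Set.mem_Ici.2 (by omega)) hik

end Recurrence

theorem exists_polynomial_eval_eq_of_periodic (s d : ℕ) (a : ℕ → ℕ → ℝ)
    (hper : ∀ l n : ℕ, a l (n + s) = a l n) :
    ∃ P : ℝ[X], ∀ k : ℕ,
      P.eval (k : ℝ) = ∑ l ∈ range (d + 1), a l (s * k) * ((s * k : ℕ) : ℝ) ^ l := by
  refine ⟨∑ l ∈ range (d + 1), C (a l 0) * (C (s : ℝ) * X) ^ l, fun k => ?_⟩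
  rw [eval_finsetSum]
  refine sum_congr rfl fun l _ => ?_
  have hperiodic : a l (k * s) = a l 0 := by
    simpa using Function.Periodic.nat_mul_eq (f := a l) (hper l) k
  rw [mul_comm s k, hperiodic]
  simp only [eval_mul, eval_C, eval_pow, eval_X, Nat.cast_mul]
  ring

theorem exists_run_of_multiples_in_Ico {s : ℕ} (hs : 0 < s) (a x₀ L len : ℕ)
    (hlen : s * (x₀ + L + 1) < len) : ∃ k, x₀ ≤ k ∧ a ≤ s * k ∧ s * (k + L) < a + len := by
  have hdiv := Nat.mul_div_le a s
  have hsucc := Nat.lt_mul_div_succ a hs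
  refine ⟨a / s + 1 + x₀, Nat.le_add_left _ _, ?_, ?_⟩
  · nlinarith
  · nlinarith

theorem stmt19_general (e : ℕ → ℕ)
    (r : ℕ → ℕ)
    (hrec : ∀ i : ℕ, 1 ≤ i → r (i + 1) = 2 * r i + 1 + e (i + 1))
    -- α n counts the representations n = n_0 + Σ_{k≥1} n_k r_k with n_0 ∈ ℕ and
    -- n_k ∈ {0,1} for k ≥ 1 (finitely many nonzero)
    (α : ℕ → ℕ)
    (hα : ∀ n : ℕ, α n = Nat.card {g : ℕ →₀ ℕ //
      (∀ k : ℕ, 1 ≤ k → g k ≤ 1) ∧ g 0 + ∑ k ∈ g.support.erase 0, g k * r k = n})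
    -- a quasi-polynomial Q of degree d with coefficients of period s, and b bounded by M
    (s : ℕ) (hs : 1 ≤ s) (M : ℝ) (d : ℕ) (a : ℕ → ℕ → ℝ)
    (hper : ∀ l n : ℕ, a l (n + s) = a l n)
    (Q : ℕ → ℝ) (hQ : ∀ n : ℕ, Q n = ∑ l ∈ Finset.range (d + 1), a l n * (n : ℝ) ^ l)
    (b : ℕ → ℝ) (hb : ∀ n : ℕ, |b n| ≤ M) :
    ∀ N : ℕ, ∃ n : ℕ, N ≤ n ∧ (α n : ℝ) ≠ Q n + b n := by
  intro N
  by_contra! hN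
  obtain ⟨P, hP⟩ := exists_polynomial_eval_eq_of_periodic s d a hper
  refine P.not_forall_exists_abs_eval_sub_two_pow_le M fun L x₀ => ?_
  set i := s * (x₀ + N + L + 1) + x₀ + 1
  obtain ⟨k, hk, hlo, hhi⟩ :=
    exists_run_of_multiples_in_Ico hs (∑ j ∈ Icc 1 i, r j) (x₀ + N) L i (by omega)
  refine ⟨i, k, by omega, by omega, fun m hm => ?_⟩
  have hrun : s * k ≤ s * (k + m) ∧ s * (k + m) ≤ s * (k + L) :=
    ⟨Nat.mul_le_mul_left s (by omega), Nat.mul_le_mul_left s (by omega)⟩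
  have hαn : α (s * (k + m)) = 2 ^ i := by
    rw [hα]
    refine card_digitRep_of_recurrence hrec (hlo.trans hrun.1) ?_
    linarith [sum_Icc_add_le_of_recurrence hrec i]
  have hQn := hN (s * (k + m)) (by nlinarith)
  rw [hαn, Nat.cast_pow, Nat.cast_ofNat] at hQn
  rw [hP, ← hQ, hQn, sub_add_cancel_left, abs_neg]
  exact hb _

theorem stmt19 (e : ℕ → ℕ)
    -- e is either the greedy binary digit sequence of some θ ≥ 0, or (the θ = ∞ case)
    -- e j = 2^{j-1} for j ≥ 2
    (he : (∃ θ : ℝ, 0 ≤ θ ∧ e 2 = ⌊2 * θ⌋₊ ∧ (∀ j : ℕ, 3 ≤ j → e j ≤ 1) ∧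
        (∀ j : ℕ, 2 ≤ j →
          0 ≤ θ - ∑ k ∈ Finset.Icc 2 j, (e k : ℝ) * 2 ^ ((1 : ℤ) - (k : ℤ)) ∧
          θ - ∑ k ∈ Finset.Icc 2 j, (e k : ℝ) * 2 ^ ((1 : ℤ) - (k : ℤ)) <
            2 ^ ((1 : ℤ) - (j : ℤ)))) ∨
      (∀ j : ℕ, 2 ≤ j → e j = 2 ^ (j - 1)))
    (r : ℕ → ℕ) (hr0 : r 0 = 1) (hr1 : r 1 = 1)
    (hrec : ∀ i : ℕ, 1 ≤ i → r (i + 1) = 2 * r i + 1 + e (i + 1))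
    -- α n counts the representations n = n_0 + Σ_{k≥1} n_k r_k with n_0 ∈ ℕ and
    -- n_k ∈ {0,1} for k ≥ 1 (finitely many nonzero)
    (α : ℕ → ℕ)
    (hα : ∀ n : ℕ, α n = Nat.card {g : ℕ →₀ ℕ //
      (∀ k : ℕ, 1 ≤ k → g k ≤ 1) ∧ g 0 + ∑ k ∈ g.support.erase 0, g k * r k = n})
    -- a quasi-polynomial Q of degree d with coefficients of period s, and b bounded by M
    (s : ℕ) (hs : 1 ≤ s) (M : ℝ) (d : ℕ) (a : ℕ → ℕ → ℝ)
    (hper : ∀ l n : ℕ, a l (n + s) = a l n)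
    (Q : ℕ → ℝ) (hQ : ∀ n : ℕ, Q n = ∑ l ∈ Finset.range (d + 1), a l n * (n : ℝ) ^ l)
    (b : ℕ → ℝ) (hb : ∀ n : ℕ, |b n| ≤ M) :
    ∀ N : ℕ, ∃ n : ℕ, N ≤ n ∧ (α n : ℝ) ≠ Q n + b n :=
  stmt19_general e r hrec α hα s hs M d a hper Q hQ b hb
end
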